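/- arXiv:2102.04178 — 8 statements merged into one kernel-verified Lean document; each statement's English description precedes it below -/
import Mathlib

section
/- Let q ∈ [1,∞) and let E be a separable reflexive Banach space. Let (ũ_m)_{m∈ℕ} be random variables on a probability space (Ω,𝔉,ℙ) with values in L^q_loc([0,∞); E) (i.e., measurable into L^q([0,T]; E) for every T > 0), and suppose each ũ_m is weakly stationary, i.e., for every τ ≥ 0 the law of the shifted trajectory S_τũ_m, where (S_τũ_m)(t) = ũ_m(t+τ), coincides with the law of ũ_m on L^q_loc([0,∞); E). If ũ is a random variable with values in L^q_loc([0,∞); E) such that ℙ-almost surely ũ_m ⇀ ũ weakly in L^q([0,T]; E) for every T > 0 (i.e., ∫_0^T ⟨φ(t), ũ_m(t)⟩ dt → ∫_0^T ⟨φ(t), ũ(t)⟩ dt for every φ ∈ L^{q'}([0,T]; E*)), then ũ is weakly stationary: for every τ ≥ 0 the laws of S_τũ and ũ on L^q_loc([0,∞); E) coincide. -/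
/-!
Fix `τ ≥ 0` and `T > 0`, and let `(e n)` be functionals separating the points of `E`. Pairing with
the test functions `1_(a,b) • e n` (`a, b` rational) gives countably many continuous functionals
`ℓᵢ` on the Polish space `L^p((0,T]; E)` that jointly separate points, so `f ↦ (ℓᵢ f)ᵢ` is a Borel
embedding into a countable power of `ℝ`. Because a shifted test function is again a test function, weak convergence
gives `ℓᵢ (S_τ uₘ) → ℓᵢ (S_τ v)` and `ℓᵢ uₘ → ℓᵢ v` almost surely for every `i`. By dominated
convergence the laws of the embedded variables converge, and stationarity of `uₘ` says that the
two sequences of laws coincide, so their limits coincide. Pulling back along the embedding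
gives the same law for `S_τ v` and `v` on `L^p((0,T]; E)`.
-/

open MeasureTheory Filter ENNReal Topology Set BoundedContinuousFunction

theorem exists_seq_strongDual_separating (E : Type*) [NormedAddCommGroup E] [NormedSpace ℝ E]
    [TopologicalSpace.SeparableSpace E] :
    ∃ e : ℕ → StrongDual ℝ E, ∀ x, (∀ n, e n x = 0) → x = 0 := by
  have : Nonempty E := ⟨0⟩
  set d := TopologicalSpace.denseSeq E
  choose e he_norm he_apply using fun n => exists_dual_vector'' ℝ (d n)
  refine ⟨e, fun x hx => ?_⟩
  by_contra hx0
  obtain ⟨n, hn⟩ := Metric.denseRange_iff.mp (TopologicalSpace.denseRange_denseSeq E) x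
    (‖x‖ / 2) (by positivity)
  have h_le : ‖d n‖ ≤ dist x (d n) := by
    calc ‖d n‖ = e n (d n - x) := by simp [he_apply, hx n]
      _ ≤ ‖e n‖ * ‖d n - x‖ := (le_abs_self _).trans ((e n).le_opNorm _)
      _ ≤ dist x (d n) := by
        rw [dist_comm, dist_eq_norm]; exact mul_le_of_le_one_left (norm_nonneg _) (he_norm n)
  have := norm_le_insert' x (d n)
  rw [← dist_eq_norm] at this
  linarith [norm_pos_iff.mpr hx0]

theorem MeasureTheory.Integrable.ae_eq_zero_of_forall_setIntegral_Ioo_rat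
    {F : Type*} [NormedAddCommGroup F] [NormedSpace ℝ F] [CompleteSpace F]
    {μ : Measure ℝ} {w : ℝ → F} (hw : Integrable w μ)
    (h : ∀ a b : ℚ, ∫ t in Ioo (a : ℝ) b, w t ∂μ = 0) : w =ᵐ[μ] 0 := by
  set ν := μ.withDensityᵥ w
  have hν : ∀ a b : ℚ, ν (Ioo (a : ℝ) b) = 0 := fun a b => by
    rw [withDensityᵥ_apply hw measurableSet_Ioo, h]
  have hν_univ : ν univ = 0 := by
    have hlim := VectorMeasure.tendsto_vectorMeasure_iUnion_atTop_nat (v := ν)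
      (s := fun n : ℕ => Ioo (-(n : ℝ)) n)
      (fun m n hmn => Ioo_subset_Ioo (by simpa using hmn) (by simpa using hmn))
      (fun _ => measurableSet_Ioo)
    have hU : (⋃ n : ℕ, Ioo (-(n : ℝ)) n) = univ := by
      refine eq_univ_of_forall fun x => mem_iUnion.mpr ?_
      obtain ⟨n, hn⟩ := exists_nat_gt |x|
      exact ⟨n, neg_lt_of_abs_lt hn, lt_of_abs_lt hn⟩
    rw [hU] at hlim
    refine tendsto_nhds_unique hlim (tendsto_const_nhds.congr fun n => ?_)
    simpa using (hν (-n) n).symm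
  have hν_zero : ν = 0 := VectorMeasure.ext_of_generateFrom _
    (fun s hs => by
      simp only [mem_iUnion, mem_singleton_iff] at hs
      obtain ⟨a, b, -, rfl⟩ := hs
      exact hν a b)
    (BorelSpace.measurable_eq.trans Real.borel_eq_generateFrom_Ioo_rat) Real.isPiSystem_Ioo_rat
    (by simpa using hν_univ)
  exact hw.ae_eq_of_withDensityᵥ_eq (integrable_zero _ _ _)
    (by rw [withDensityᵥ_zero]; exact hν_zero)

section EqualityInLaw

variable {Ω : Type*} [MeasurableSpace Ω] {ℙ : Measure Ω} [IsFiniteMeasure ℙ]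
  {M : Type*} [TopologicalSpace M] [MeasurableSpace M]

theorem tendsto_integral_comp_of_ae_tendsto [OpensMeasurableSpace M] (Ψ : M →ᵇ ℝ)
    {X : ℕ → Ω → M} {X' : Ω → M}
    (hX : ∀ m, AEMeasurable (X m) ℙ)
    (hlim : ∀ᵐ ω ∂ℙ, Tendsto (fun m => X m ω) atTop (𝓝 (X' ω))) :
    Tendsto (fun m => ∫ ω, Ψ (X m ω) ∂ℙ) atTop (𝓝 (∫ ω, Ψ (X' ω) ∂ℙ)) :=
  tendsto_integral_of_dominated_convergence (fun _ => ‖Ψ‖)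
    (fun m => (Ψ.continuous.measurable.comp_aemeasurable (hX m)).aestronglyMeasurable)
    (integrable_const _) (fun _ => Eventually.of_forall fun _ => Ψ.norm_coe_le_norm _)
    (hlim.mono fun _ hω => (Ψ.continuous.tendsto _).comp hω)

theorem map_eq_of_ae_tendsto [HasOuterApproxClosed M] [BorelSpace M]
    {X Y : ℕ → Ω → M} {X' Y' : Ω → M}
    (hX : ∀ m, AEMeasurable (X m) ℙ) (hY : ∀ m, AEMeasurable (Y m) ℙ)
    (hX' : AEMeasurable X' ℙ) (hY' : AEMeasurable Y' ℙ)
    (hXY : ∀ m, ℙ.map (X m) = ℙ.map (Y m))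
    (hX_lim : ∀ᵐ ω ∂ℙ, Tendsto (fun m => X m ω) atTop (𝓝 (X' ω)))
    (hY_lim : ∀ᵐ ω ∂ℙ, Tendsto (fun m => Y m ω) atTop (𝓝 (Y' ω))) :
    ℙ.map X' = ℙ.map Y' := by
  refine ext_of_forall_integral_eq_of_IsFiniteMeasure fun Ψ => ?_
  rw [integral_map hX' Ψ.continuous.aestronglyMeasurable,
    integral_map hY' Ψ.continuous.aestronglyMeasurable]
  refine tendsto_nhds_unique ((tendsto_integral_comp_of_ae_tendsto Ψ hX hX_lim).congr fun m => ?_)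
    (tendsto_integral_comp_of_ae_tendsto Ψ hY hY_lim)
  rw [← integral_map (hX m) Ψ.continuous.aestronglyMeasurable, hXY m,
    integral_map (hY m) Ψ.continuous.aestronglyMeasurable]

theorem map_eq_of_ae_tendsto_of_separating [PolishSpace M] [BorelSpace M]
    {ι : Type*} [Countable ι] {ℓ : ι → M → ℝ} (hℓ : ∀ i, Continuous (ℓ i))
    (hℓ_sep : Function.Injective fun x i => ℓ i x)
    {X Y : ℕ → Ω → M} {X' Y' : Ω → M}
    (hX : ∀ m, AEMeasurable (X m) ℙ) (hY : ∀ m, AEMeasurable (Y m) ℙ)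
    (hX' : AEMeasurable X' ℙ) (hY' : AEMeasurable Y' ℙ)
    (hXY : ∀ m, ℙ.map (X m) = ℙ.map (Y m))
    (hX_lim : ∀ᵐ ω ∂ℙ, ∀ i, Tendsto (fun m => ℓ i (X m ω)) atTop (𝓝 (ℓ i (X' ω))))
    (hY_lim : ∀ᵐ ω ∂ℙ, ∀ i, Tendsto (fun m => ℓ i (Y m ω)) atTop (𝓝 (ℓ i (Y' ω)))) :
    ℙ.map X' = ℙ.map Y' := by
  set J : M → ι → ℝ := fun x i => ℓ i x
  have hJ_cont : Continuous J := continuous_pi hℓ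
  have hJ : MeasurableEmbedding J := hJ_cont.measurableEmbedding hℓ_sep
  have hmap : ∀ Z : Ω → M, AEMeasurable Z ℙ → (ℙ.map Z).map J = ℙ.map (J ∘ Z) := fun Z hZ =>
    AEMeasurable.map_map_of_aemeasurable hJ.measurable.aemeasurable hZ
  have hJXY : ℙ.map (J ∘ X') = ℙ.map (J ∘ Y') := by
    refine map_eq_of_ae_tendsto (X := fun m => J ∘ X m) (Y := fun m => J ∘ Y m)
      (fun m => hJ.measurable.comp_aemeasurable (hX m))
      (fun m => hJ.measurable.comp_aemeasurable (hY m))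
      (hJ.measurable.comp_aemeasurable hX') (hJ.measurable.comp_aemeasurable hY')
      (fun m => by rw [← hmap _ (hX m), ← hmap _ (hY m), hXY m])
      (hX_lim.mono fun _ hω => tendsto_pi_nhds.mpr hω)
      (hY_lim.mono fun _ hω => tendsto_pi_nhds.mpr hω)
  rw [← hJ.comap_map (ℙ.map X'), ← hJ.comap_map (ℙ.map Y'), hmap _ hX', hmap _ hY', hJXY]

theorem map_eq_map_of_forall_integral_eq [HasOuterApproxClosed M] [BorelSpace M]
    {X Y : Ω → M} (hX : AEMeasurable X ℙ) (hY : AEMeasurable Y ℙ)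
    (h : ∀ Ψ : M →ᵇ ℝ, ∫ ω, Ψ (X ω) ∂ℙ = ∫ ω, Ψ (Y ω) ∂ℙ) :
    ℙ.map X = ℙ.map Y := by
  refine ext_of_forall_integral_eq_of_IsFiniteMeasure fun Ψ => ?_
  rw [integral_map hX Ψ.continuous.aestronglyMeasurable,
    integral_map hY Ψ.continuous.aestronglyMeasurable, h]

end EqualityInLaw

theorem measurePreserving_add_const_restrict_Ioc (τ a b : ℝ) :
    MeasurePreserving (· + τ) (volume.restrict (Ioc a b))
      (volume.restrict (Ioc (a + τ) (b + τ))) := by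
  simpa using (measurePreserving_add_right volume τ).restrict_preimage
    (measurableSet_Ioc (a := a + τ) (b := b + τ))

theorem measurePreserving_sub_const_restrict_Ioc (τ a b : ℝ) :
    MeasurePreserving (· - τ) (volume.restrict (Ioc (a + τ) (b + τ)))
      (volume.restrict (Ioc a b)) := by
  simpa using (measurePreserving_sub_right volume τ).restrict_preimage
    (measurableSet_Ioc (a := a) (b := b))

section WeakConvergence

variable {E : Type*} [NormedAddCommGroup E] [NormedSpace ℝ E]

def TendstoWeaklyOnIoc (p' : ℝ≥0∞) (u : ℕ → ℝ → E) (v : ℝ → E) : Prop :=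
  ∀ T : ℝ, 0 < T → ∀ φ : ℝ → StrongDual ℝ E, MemLp φ p' (volume.restrict (Ioc 0 T)) →
    Tendsto (fun m => ∫ t in Ioc 0 T, φ t (u m t)) atTop (𝓝 (∫ t in Ioc 0 T, φ t (v t)))

theorem TendstoWeaklyOnIoc.comp_add_const {p' : ℝ≥0∞} {u : ℕ → ℝ → E} {v : ℝ → E}
    (h : TendstoWeaklyOnIoc p' u v) {τ : ℝ} (hτ : 0 ≤ τ) :
    TendstoWeaklyOnIoc p' (fun m t => u m (t + τ)) (fun t => v (t + τ)) := by
  intro T hT φ hφ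
  let ψ : ℝ → StrongDual ℝ E := (Ioc τ (T + τ)).indicator fun s => φ (s - τ)
  have hsub : Ioc τ (T + τ) ⊆ Ioc 0 (T + τ) := Ioc_subset_Ioc_left hτ
  have hψ : MemLp ψ p' (volume.restrict (Ioc 0 (T + τ))) := by
    refine (memLp_indicator_iff_restrict (f := fun s => φ (s - τ)) measurableSet_Ioc).mpr ?_
    rw [Measure.restrict_restrict measurableSet_Ioc, inter_eq_left.mpr hsub]
    have := hφ.comp_measurePreserving (measurePreserving_sub_const_restrict_Ioc τ 0 T)
    rwa [zero_add] at this
  have key : ∀ g : ℝ → E,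
      ∫ t in Ioc 0 T, φ t (g (t + τ)) = ∫ s in Ioc 0 (T + τ), ψ s (g s) := fun g => by
    have hshift := (measurePreserving_add_const_restrict_Ioc τ 0 T).integral_comp
      (measurableEmbedding_addRight τ) fun s => φ (s - τ) (g s)
    simp only [add_sub_cancel_right, zero_add] at hshift
    have hψg : ∀ s, ψ s (g s) = (Ioc τ (T + τ)).indicator (fun s => φ (s - τ) (g s)) s :=
      fun s => by by_cases hs : s ∈ Ioc τ (T + τ) <;> simp [ψ, hs]
    simp only [hshift, hψg, setIntegral_indicator measurableSet_Ioc, inter_eq_right.mpr hsub]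
  simpa only [key] using h (T + τ) (by linarith) ψ hψ

theorem MeasureTheory.MemLp.continuous_integral_apply_Lp {α : Type*} [MeasurableSpace α]
    {μ : Measure α} {p p' : ℝ≥0∞} [Fact (1 ≤ p)] [HolderConjugate p p'] {φ : α → StrongDual ℝ E}
    (hφ : MemLp φ p' μ) :
    Continuous fun f : Lp E p μ => ∫ x, φ x (f x) ∂μ := by
  have : Fact (1 ≤ p') := ⟨HolderConjugate.one_le p' p⟩
  refine (((NormedSpace.inclusionInDoubleDual ℝ E).lpPairing μ p p').continuous.clm_apply
    (continuous_const : Continuous fun _ : Lp E p μ => hφ.toLp φ)).congr fun f => ?_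
  rw [ContinuousLinearMap.lpPairing_eq_integral]
  exact integral_congr_ae (hφ.coeFn_toLp.mono fun x hx => by simp [hx])

theorem MeasureTheory.MemLp.integral_apply_toLp {α : Type*} [MeasurableSpace α]
    {μ : Measure α} {p : ℝ≥0∞} {f : α → E} (hf : MemLp f p μ) (φ : α → StrongDual ℝ E) :
    ∫ x, φ x (hf.toLp f x) ∂μ = ∫ x, φ x (f x) ∂μ :=
  integral_congr_ae (hf.coeFn_toLp.mono fun x hx => congrArg (φ x) hx)

noncomputable def ratIooTest (e : ℕ → StrongDual ℝ E) (i : ℚ × ℚ × ℕ) : ℝ → StrongDual ℝ E :=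
  (Ioo (i.1 : ℝ) i.2.1).indicator fun _ => e i.2.2

theorem memLp_ratIooTest {μ : Measure ℝ} [IsFiniteMeasure μ] (p' : ℝ≥0∞)
    (e : ℕ → StrongDual ℝ E) (i : ℚ × ℚ × ℕ) : MemLp (ratIooTest e i) p' μ :=
  memLp_indicator_const p' measurableSet_Ioo _ (Or.inr (measure_ne_top _ _))

theorem integral_ratIooTest_apply {μ : Measure ℝ} (e : ℕ → StrongDual ℝ E) (a b : ℚ) (n : ℕ)
    (f : ℝ → E) : ∫ t, ratIooTest e (a, b, n) t (f t) ∂μ = ∫ t in Ioo (a : ℝ) b, e n (f t) ∂μ := by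
  rw [← integral_indicator measurableSet_Ioo]
  congr 1 with t
  by_cases ht : t ∈ Ioo (a : ℝ) b <;> simp [ratIooTest, ht]

theorem injective_integral_ratIooTest {μ : Measure ℝ} [IsFiniteMeasure μ] {p : ℝ≥0∞}
    [Fact (1 ≤ p)]
    {e : ℕ → StrongDual ℝ E} (he : ∀ x, (∀ n, e n x = 0) → x = 0) :
    Function.Injective fun (f : Lp E p μ) i => ∫ t, ratIooTest e i t (f t) ∂μ := by
  intro f g hfg
  have hint : ∀ f : Lp E p μ, Integrable f μ := fun f => (Lp.memLp f).integrable Fact.out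
  have hzero : ∀ n, (fun t => e n (f t - g t)) =ᵐ[μ] 0 := fun n =>
    ((e n).integrable_comp ((hint f).sub (hint g))).ae_eq_zero_of_forall_setIntegral_Ioo_rat
      fun a b => by
        have hab := congrFun hfg (a, b, n)
        simp only [integral_ratIooTest_apply] at hab
        simp only [Pi.sub_apply, map_sub]
        rw [integral_sub ((e n).integrable_comp (hint f)).integrableOn
          ((e n).integrable_comp (hint g)).integrableOn, hab, sub_self]
  refine Lp.ext ?_
  filter_upwards [ae_all_iff.mpr hzero] with t ht
  exact sub_eq_zero.mp (he _ ht)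

end WeakConvergence

/-- A random variable in `L^q_loc([0,∞); E)` is encoded by its trajectories `Ω → ℝ → E` together
with the `L^p((0,T]; E)`-valued random variables induced by its time shifts, one for each
horizon `T`; equality of laws is tested against bounded continuous functions on these spaces. -/
theorem stmt0_general
    {Ω : Type*} [MeasurableSpace Ω] (ℙ : Measure Ω) [IsProbabilityMeasure ℙ]
    {E : Type*} [NormedAddCommGroup E] [NormedSpace ℝ E] [CompleteSpace E]
    [SecondCountableTopology E]
    (p p' : ENNReal) [Fact (1 ≤ p)] (hp : p ≠ ⊤) (hpp' : 1 / p + 1 / p' = 1)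
    (u : ℕ → Ω → ℝ → E) (v : Ω → ℝ → E)
    -- `u m` and `v` take values in `L^q_loc([0,∞); E)` :
    (humem : ∀ m ω (τ T : ℝ), 0 ≤ τ → 0 < T →
      MemLp (fun t => u m ω (t + τ)) p (volume.restrict (Set.Ioc (0 : ℝ) T)))
    (hvmem : ∀ ω (τ T : ℝ), 0 ≤ τ → 0 < T →
      MemLp (fun t => v ω (t + τ)) p (volume.restrict (Set.Ioc (0 : ℝ) T)))
    (huAE : ∀ m (τ T : ℝ) (hτ : 0 ≤ τ) (hT : 0 < T),
      AEStronglyMeasurable (fun ω => (humem m ω τ T hτ hT).toLp _) ℙ)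
    (hvAE : ∀ (τ T : ℝ) (hτ : 0 ≤ τ) (hT : 0 < T),
      AEStronglyMeasurable (fun ω => (hvmem ω τ T hτ hT).toLp _) ℙ)
    -- each `u m` is weakly stationary :
    (hustat : ∀ m (τ : ℝ) (hτ : 0 ≤ τ) (T : ℝ) (hT : 0 < T)
      (Φ : BoundedContinuousFunction (Lp E p (volume.restrict (Set.Ioc (0 : ℝ) T))) ℝ),
      ∫ ω, Φ ((humem m ω τ T hτ hT).toLp _) ∂ℙ =
        ∫ ω, Φ ((humem m ω 0 T le_rfl hT).toLp _) ∂ℙ)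
    -- a.s. weak convergence `u m ⇀ v` in `L^q([0,T]; E)` for every `T > 0` :
    (hconv : ∀ᵐ ω ∂ℙ, ∀ T : ℝ, 0 < T → ∀ φ : ℝ → StrongDual ℝ E,
      MemLp φ p' (volume.restrict (Set.Ioc (0 : ℝ) T)) →
      Tendsto (fun m => ∫ t in Set.Ioc (0 : ℝ) T, φ t (u m ω t))
        atTop (nhds (∫ t in Set.Ioc (0 : ℝ) T, φ t (v ω t)))) :
    -- conclusion: `v` is weakly stationary :
    ∀ (τ : ℝ) (hτ : 0 ≤ τ) (T : ℝ) (hT : 0 < T)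
      (Φ : BoundedContinuousFunction (Lp E p (volume.restrict (Set.Ioc (0 : ℝ) T))) ℝ),
      ∫ ω, Φ ((hvmem ω τ T hτ hT).toLp _) ∂ℙ =
        ∫ ω, Φ ((hvmem ω 0 T le_rfl hT).toLp _) ∂ℙ := by
  intro τ hτ T hT Φ
  have : Fact (p ≠ ⊤) := ⟨hp⟩
  have : p.HolderConjugate p' := holderConjugate_iff.mpr (by simpa only [one_div] using hpp')
  obtain ⟨e, he⟩ := exists_seq_strongDual_separating E
  borelize ↥(Lp E p (volume.restrict (Ioc (0 : ℝ) T)))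
  have hlim : ∀ σ (hσ : 0 ≤ σ), ∀ᵐ ω ∂ℙ, ∀ i,
      Tendsto (fun m => ∫ t, ratIooTest e i t ((humem m ω σ T hσ hT).toLp _ t)
          ∂volume.restrict (Ioc 0 T)) atTop
        (𝓝 (∫ t, ratIooTest e i t ((hvmem ω σ T hσ hT).toLp _ t) ∂volume.restrict (Ioc 0 T))) :=
    fun σ hσ => by
      filter_upwards [hconv] with ω hω i
      simp only [MemLp.integral_apply_toLp]
      exact TendstoWeaklyOnIoc.comp_add_const hω hσ T hT _ (memLp_ratIooTest p' e i)
  have hlaw := map_eq_of_ae_tendsto_of_separating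
    (fun i => (memLp_ratIooTest p' e i).continuous_integral_apply_Lp)
    (injective_integral_ratIooTest he)
    (fun m => (huAE m τ T hτ hT).aemeasurable) (fun m => (huAE m 0 T le_rfl hT).aemeasurable)
    (hvAE τ T hτ hT).aemeasurable (hvAE 0 T le_rfl hT).aemeasurable
    (fun m => map_eq_map_of_forall_integral_eq (huAE m τ T hτ hT).aemeasurable
      (huAE m 0 T le_rfl hT).aemeasurable (hustat m τ hτ T hT))
    (hlim τ hτ) (hlim 0 le_rfl)
  rw [← integral_map (hvAE τ T hτ hT).aemeasurable Φ.continuous.aestronglyMeasurable, hlaw,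
    integral_map (hvAE 0 T le_rfl hT).aemeasurable Φ.continuous.aestronglyMeasurable]

/-- Weak stationarity (in the sense of laws on `L^q_loc([0,∞); E)`) is preserved under
almost sure weak convergence in `L^q([0,T]; E)` for every `T > 0`.  Here `E` is a
separable reflexive Banach space (reflexivity expressed via surjectivity of the
canonical embedding into the double dual), `p` plays the role of the exponent
`q ∈ [1, ∞)` and `p'` of its conjugate exponent.  A random variable with values in
`L^q_loc([0,∞); E)` is modelled as a map `Ω → ℝ → E` whose trajectories restricted to
any `(0,T]` belong to `L^p`, such that the induced `L^p((0,T]; E)`-valued maps (of any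
time shift) are random variables; equality of the laws of the shifted and unshifted
trajectories on `L^q_loc` is expressed by testing the corresponding
`L^p((0,T]; E)`-valued random variables against all bounded continuous functions, for
every horizon `T > 0`. -/
theorem stmt0
    {Ω : Type*} [MeasurableSpace Ω] (ℙ : Measure Ω) [IsProbabilityMeasure ℙ]
    {E : Type*} [NormedAddCommGroup E] [NormedSpace ℝ E] [CompleteSpace E]
    [SecondCountableTopology E] [MeasurableSpace E] [BorelSpace E]
    (hrefl : Function.Surjective ⇑(NormedSpace.inclusionInDoubleDual ℝ E))
    (p p' : ENNReal) [Fact (1 ≤ p)] (hp : p ≠ ⊤) (hpp' : 1 / p + 1 / p' = 1)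
    (u : ℕ → Ω → ℝ → E) (v : Ω → ℝ → E)
    -- `u m` and `v` take values in `L^q_loc([0,∞); E)` :
    (humem : ∀ m ω (τ T : ℝ), 0 ≤ τ → 0 < T →
      MemLp (fun t => u m ω (t + τ)) p (volume.restrict (Set.Ioc (0 : ℝ) T)))
    (hvmem : ∀ ω (τ T : ℝ), 0 ≤ τ → 0 < T →
      MemLp (fun t => v ω (t + τ)) p (volume.restrict (Set.Ioc (0 : ℝ) T)))
    (huAE : ∀ m (τ T : ℝ) (hτ : 0 ≤ τ) (hT : 0 < T),
      AEStronglyMeasurable (fun ω => (humem m ω τ T hτ hT).toLp _) ℙ)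
    (hvAE : ∀ (τ T : ℝ) (hτ : 0 ≤ τ) (hT : 0 < T),
      AEStronglyMeasurable (fun ω => (hvmem ω τ T hτ hT).toLp _) ℙ)
    -- each `u m` is weakly stationary :
    (hustat : ∀ m (τ : ℝ) (hτ : 0 ≤ τ) (T : ℝ) (hT : 0 < T)
      (Φ : BoundedContinuousFunction (Lp E p (volume.restrict (Set.Ioc (0 : ℝ) T))) ℝ),
      ∫ ω, Φ ((humem m ω τ T hτ hT).toLp _) ∂ℙ =
        ∫ ω, Φ ((humem m ω 0 T le_rfl hT).toLp _) ∂ℙ)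
    -- a.s. weak convergence `u m ⇀ v` in `L^q([0,T]; E)` for every `T > 0` :
    (hconv : ∀ᵐ ω ∂ℙ, ∀ T : ℝ, 0 < T → ∀ φ : ℝ → StrongDual ℝ E,
      MemLp φ p' (volume.restrict (Set.Ioc (0 : ℝ) T)) →
      Tendsto (fun m => ∫ t in Set.Ioc (0 : ℝ) T, φ t (u m ω t))
        atTop (nhds (∫ t in Set.Ioc (0 : ℝ) T, φ t (v ω t)))) :
    -- conclusion: `v` is weakly stationary :
    ∀ (τ : ℝ) (hτ : 0 ≤ τ) (T : ℝ) (hT : 0 < T)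
      (Φ : BoundedContinuousFunction (Lp E p (volume.restrict (Set.Ioc (0 : ℝ) T))) ℝ),
      ∫ ω, Φ ((hvmem ω τ T hτ hT).toLp _) ∂ℙ =
        ∫ ω, Φ ((hvmem ω 0 T le_rfl hT).toLp _) ∂ℙ :=
  stmt0_general ℙ p p' hp hpp' u v humem hvmem huAE hvAE hustat hconv
end

section
/- Let E be a separable reflexive Banach space and let (ũ_m)_{m∈ℕ} be measurable E-valued stochastic processes on [0,∞) defined on a probability space (Ω,𝔉,ℙ), each stationary in the classical sense: for every τ ≥ 0, every n ∈ ℕ and all t_1,…,t_n ∈ [0,∞), the joint law of (ũ_m(t_1+τ),…,ũ_m(t_n+τ)) on Eⁿ equals the joint law of (ũ_m(t_1),…,ũ_m(t_n)). Assume that for every T > 0, sup_{m∈ℕ} 𝔼[ sup_{t∈[0,T]} ‖ũ_m(t)‖_E ] < ∞, and that ℙ-almost surely ũ_m → ũ in C_loc([0,∞); (E, weak)), i.e., for every f ∈ E* the real functions t ↦ f(ũ_m(t)) converge to t ↦ f(ũ(t)) uniformly on every compact subset of [0,∞). Then ũ is stationary in the classical sense: for every τ ≥ 0 and all t_1,…,t_n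 ∈ [0,∞), the joint law of (ũ(t_1+τ),…,ũ(t_n+τ)) equals that of (ũ(t_1),…,ũ(t_n)) on Eⁿ. -/
open MeasureTheory Filter Topology

/-!
Stationarity only involves the finite-dimensional laws `(ũ(t₁), …, ũ(tₙ))`. Almost sure weak
convergence `ũ_m(tᵢ) ⇀ ũ(tᵢ)` gives, by dominated convergence, pointwise convergence of the
characteristic functionals `L ↦ 𝔼 exp(i L(ũ_m(t)))` of these laws on `Eⁿ`. The shifted and
unshifted laws of `ũ_m` agree, so their limits agree, and a finite measure on a separable Banach
space is determined by its characteristic functional.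
-/

section WeakConvergence

variable {ι E : Type*} [Fintype ι] [DecidableEq ι] [NormedAddCommGroup E] [NormedSpace ℝ E]

theorem tendsto_strongDual_pi_of_forall_tendsto {x : ℕ → ι → E} {y : ι → E}
    (h : ∀ i (φ : StrongDual ℝ E), Tendsto (fun m => φ (x m i)) atTop (𝓝 (φ (y i))))
    (L : StrongDual ℝ (ι → E)) :
    Tendsto (fun m => L (x m)) atTop (𝓝 (L y)) := by
  simp_rw [← L.sum_comp_single]
  exact tendsto_finsetSum _ fun i _ => h i _

end WeakConvergence

section CharFunDual

variable {Ω F : Type*} [MeasurableSpace Ω] {ℙ : Measure Ω} [IsFiniteMeasure ℙ]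
  [NormedAddCommGroup F] [NormedSpace ℝ F] [MeasurableSpace F]

theorem tendsto_charFunDual_map_of_ae_tendsto [OpensMeasurableSpace F]
    {X : ℕ → Ω → F} {Y : Ω → F} (hX : ∀ m, AEMeasurable (X m) ℙ) (hY : AEMeasurable Y ℙ)
    (hXY : ∀ᵐ ω ∂ℙ, ∀ L : StrongDual ℝ F, Tendsto (fun m => L (X m ω)) atTop (𝓝 (L (Y ω))))
    (L : StrongDual ℝ F) :
    Tendsto (fun m => charFunDual (ℙ.map (X m)) L) atTop (𝓝 (charFunDual (ℙ.map Y) L)) := by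
  have hchar : Continuous fun x : F => Complex.exp (L x * Complex.I) := by fun_prop
  simp_rw [charFunDual_apply]
  rw [integral_map hY hchar.aestronglyMeasurable]
  simp_rw [integral_map (hX _) hchar.aestronglyMeasurable]
  refine tendsto_integral_of_dominated_convergence (fun _ => 1)
    (fun m => (hchar.measurable.comp_aemeasurable (hX m)).aestronglyMeasurable)
    (integrable_const 1) (fun m => ae_of_all _ fun ω => ?_) ?_
  · rw [Complex.norm_exp_ofReal_mul_I]
  · filter_upwards [hXY] with ω hω
    have hexp : Continuous fun r : ℝ => Complex.exp (r * Complex.I) := by fun_prop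
    exact (hexp.tendsto _).comp (hω L)

theorem map_eq_map_of_ae_tendsto [CompleteSpace F] [SecondCountableTopology F] [BorelSpace F]
    {X X' : ℕ → Ω → F} {Y Y' : Ω → F}
    (hX : ∀ m, AEMeasurable (X m) ℙ) (hX' : ∀ m, AEMeasurable (X' m) ℙ)
    (hY : AEMeasurable Y ℙ) (hY' : AEMeasurable Y' ℙ)
    (hlaw : ∀ m, ℙ.map (X m) = ℙ.map (X' m))
    (hXY : ∀ᵐ ω ∂ℙ, ∀ L : StrongDual ℝ F, Tendsto (fun m => L (X m ω)) atTop (𝓝 (L (Y ω))))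
    (hXY' : ∀ᵐ ω ∂ℙ, ∀ L : StrongDual ℝ F, Tendsto (fun m => L (X' m ω)) atTop (𝓝 (L (Y' ω)))) :
    ℙ.map Y = ℙ.map Y' := by
  refine Measure.ext_of_charFunDual (funext fun L => tendsto_nhds_unique ?_
    (tendsto_charFunDual_map_of_ae_tendsto hX' hY' hXY' L))
  simpa only [hlaw] using tendsto_charFunDual_map_of_ae_tendsto hX hY hXY L

end CharFunDual

theorem stmt1_general
    {Ω : Type*} [MeasurableSpace Ω] (ℙ : Measure Ω) [IsProbabilityMeasure ℙ]
    {E : Type*} [NormedAddCommGroup E] [NormedSpace ℝ E] [CompleteSpace E]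
    [SecondCountableTopology E] [MeasurableSpace E] [BorelSpace E]
    (u : ℕ → Ω → ℝ → E) (v : Ω → ℝ → E)
    (humeas : ∀ m (t : ℝ), Measurable fun ω => u m ω t)
    (hvmeas : ∀ t : ℝ, Measurable fun ω => v ω t)
    (hustat : ∀ m (τ : ℝ), 0 ≤ τ → ∀ (n : ℕ) (t : Fin n → ℝ), (∀ i, 0 ≤ t i) →
      Measure.map (fun ω i => u m ω (t i + τ)) ℙ =
        Measure.map (fun ω i => u m ω (t i)) ℙ)
    (hconv : ∀ᵐ ω ∂ℙ, ∀ φ : StrongDual ℝ E, ∀ K : Set ℝ,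
      K ⊆ Set.Ici (0 : ℝ) → IsCompact K →
      TendstoUniformlyOn (fun m t => φ (u m ω t)) (fun t => φ (v ω t)) atTop K) :
    ∀ (τ : ℝ), 0 ≤ τ → ∀ (n : ℕ) (t : Fin n → ℝ), (∀ i, 0 ≤ t i) →
      Measure.map (fun ω i => v ω (t i + τ)) ℙ =
        Measure.map (fun ω i => v ω (t i)) ℙ := by
  intro τ hτ n t ht
  have hweak : ∀ s : Fin n → ℝ, (∀ i, 0 ≤ s i) → ∀ᵐ ω ∂ℙ, ∀ L : StrongDual ℝ (Fin n → E),
      Tendsto (fun m => L fun i => u m ω (s i)) atTop (𝓝 (L fun i => v ω (s i))) := by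
    intro s hs
    filter_upwards [hconv] with ω hω
    refine tendsto_strongDual_pi_of_forall_tendsto fun i φ => ?_
    exact (hω φ {s i} (Set.singleton_subset_iff.mpr (hs i)) isCompact_singleton).tendsto_at rfl
  have hu (m : ℕ) (s : Fin n → ℝ) : AEMeasurable (fun ω i => u m ω (s i)) ℙ :=
    (measurable_pi_lambda _ fun i => humeas m (s i)).aemeasurable
  have hv (s : Fin n → ℝ) : AEMeasurable (fun ω i => v ω (s i)) ℙ :=
    (measurable_pi_lambda _ fun i => hvmeas (s i)).aemeasurable
  exact map_eq_map_of_ae_tendsto (fun m => hu m _) (fun m => hu m t) (hv _) (hv t)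
    (fun m => hustat m τ hτ n t ht) (hweak _ fun i => add_nonneg (ht i) hτ) (hweak t ht)

/-- Classical stationarity is preserved under a.s. convergence in
`C_loc([0,∞); (E, weak))` together with a uniform bound on `𝔼[sup_{[0,T]} ‖·‖]`.
Here `E` is a separable reflexive Banach space (reflexivity being expressed by the
surjectivity of the canonical embedding into the double dual). -/
theorem stmt1
    {Ω : Type*} [MeasurableSpace Ω] (ℙ : Measure Ω) [IsProbabilityMeasure ℙ]
    {E : Type*} [NormedAddCommGroup E] [NormedSpace ℝ E] [CompleteSpace E]
    [SecondCountableTopology E] [MeasurableSpace E] [BorelSpace E]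
    (hrefl : Function.Surjective ⇑(NormedSpace.inclusionInDoubleDual ℝ E))
    (u : ℕ → Ω → ℝ → E) (v : Ω → ℝ → E)
    (humeas : ∀ m (t : ℝ), Measurable fun ω => u m ω t)
    (hvmeas : ∀ t : ℝ, Measurable fun ω => v ω t)
    (hustat : ∀ m (τ : ℝ), 0 ≤ τ → ∀ (n : ℕ) (t : Fin n → ℝ), (∀ i, 0 ≤ t i) →
      Measure.map (fun ω i => u m ω (t i + τ)) ℙ =
        Measure.map (fun ω i => u m ω (t i)) ℙ)
    (hbound : ∀ T : ℝ, 0 < T → ∃ C : ENNReal, C ≠ ⊤ ∧ ∀ m,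
      ∫⁻ ω, ⨆ t ∈ Set.Icc (0 : ℝ) T, (‖u m ω t‖₊ : ENNReal) ∂ℙ ≤ C)
    (hconv : ∀ᵐ ω ∂ℙ, ∀ φ : StrongDual ℝ E, ∀ K : Set ℝ,
      K ⊆ Set.Ici (0 : ℝ) → IsCompact K →
      TendstoUniformlyOn (fun m t => φ (u m ω t)) (fun t => φ (v ω t)) atTop K) :
    ∀ (τ : ℝ), 0 ≤ τ → ∀ (n : ℕ) (t : Fin n → ℝ), (∀ i, 0 ≤ t i) →
      Measure.map (fun ω i => v ω (t i + τ)) ℙ =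
        Measure.map (fun ω i => v ω (t i)) ℙ :=
  stmt1_general ℙ u v humeas hvmeas hustat hconv
end

section
/- Under the structural hypotheses on P, there exists a constant c ≥ 1 such that for all ρ > 0 and θ > 0: c^{-1}·ρ^{5/3} ≤ p_M(ρ,θ) ≤ c·(ρ^{5/3} + ρθ). -/
open Filter

/-- Under the structural hypotheses on `P`, there is a constant `c ≥ 1` such that
`c⁻¹ ρ^(5/3) ≤ p_M(ρ,θ) ≤ c (ρ^(5/3) + ρθ)`, where
`p_M(ρ,θ) = θ^(5/2) P(ρ/θ^(3/2))`. -/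
theorem stmt3
    (P P' : ℝ → ℝ) (c0 pinf : ℝ)
    (hP_C1 : ContDiffOn ℝ 1 P (Set.Ici 0))
    (hP_C2 : ContDiffOn ℝ 2 P (Set.Ioi 0))
    (hP0 : P 0 = 0)
    (hderiv : ∀ Z : ℝ, 0 ≤ Z → HasDerivWithinAt P (P' Z) (Set.Ici 0) Z)
    (hP'pos : ∀ Z : ℝ, 0 ≤ Z → 0 < P' Z)
    (hc0 : 0 < c0)
    (hkey : ∀ Z : ℝ, 0 < Z →
      0 < 3 / 2 * (5 / 3 * P Z - Z * P' Z) / Z ∧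
        3 / 2 * (5 / 3 * P Z - Z * P' Z) / Z < c0)
    (hpinf : 0 < pinf)
    (hlim : Tendsto (fun Z : ℝ => P Z / Z ^ (5 / 3 : ℝ)) atTop (nhds pinf)) :
    ∃ c : ℝ, 1 ≤ c ∧ ∀ ρ θ : ℝ, 0 < ρ → 0 < θ →
      c⁻¹ * ρ ^ (5 / 3 : ℝ) ≤ θ ^ (5 / 2 : ℝ) * P (ρ / θ ^ (3 / 2 : ℝ)) ∧
        θ ^ (5 / 2 : ℝ) * P (ρ / θ ^ (3 / 2 : ℝ)) ≤ c * (ρ ^ (5 / 3 : ℝ) + ρ * θ) := by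
  -- From hkey, the numerator is positive: z * P' z < 5/3 * P z for z > 0.
  have hbr : ∀ z : ℝ, 0 < z → z * P' z < 5 / 3 * P z := by
    intro z hz
    have h := (hkey z hz).1
    have h2 : 0 < 3 / 2 * (5 / 3 * P z - z * P' z) := by
      have := mul_pos h hz
      rwa [div_mul_cancel₀] at this
      exact hz.ne'
    linarith
  -- Q is the function in hlim
  set Q : ℝ → ℝ := fun z => P z / z ^ (5 / 3 : ℝ) with hQ
  -- derivative of Q on (0,∞)
  have hQderiv : ∀ x : ℝ, 0 < x → HasDerivAt Q
      ((P' x * x ^ (5 / 3 : ℝ) - P x * (5 / 3 * x ^ ((5 : ℝ) / 3 - 1))) /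
        (x ^ (5 / 3 : ℝ)) ^ 2) x := by
    intro x hx
    have hP : HasDerivAt P (P' x) x :=
      (hderiv x hx.le).hasDerivAt (Ici_mem_nhds hx)
    have hpow : HasDerivAt (fun z : ℝ => z ^ (5 / 3 : ℝ))
        (5 / 3 * x ^ ((5 : ℝ) / 3 - 1)) x :=
      Real.hasDerivAt_rpow_const (Or.inl hx.ne')
    have hne : x ^ (5 / 3 : ℝ) ≠ 0 := (Real.rpow_pos_of_pos hx _).ne'
    exact hP.div hpow hne
  have hQderivneg : ∀ x : ℝ, 0 < x → deriv Q x < 0 := by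
    intro x hx
    rw [(hQderiv x hx).deriv]
    apply div_neg_of_neg_of_pos
    · have h1 : x ^ (5 / 3 : ℝ) = x * x ^ ((2 : ℝ) / 3) := by
        have h := Real.rpow_add hx 1 (2 / 3)
        norm_num at h
        exact h
      have h2 : (0 : ℝ) < x ^ ((2 : ℝ) / 3) := Real.rpow_pos_of_pos hx _
      have h3 := hbr x hx
      rw [show ((5 : ℝ) / 3 - 1) = 2 / 3 by norm_num, h1]
      nlinarith
    · positivity
  -- Q is strictly antitone on (0,∞)
  have hQanti : StrictAntiOn Q (Set.Ioi 0) := by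
    apply StrictAntiOn.mono (s := Set.Ioi 0) _ (le_refl _)
    apply strictAntiOn_of_deriv_neg (convex_Ioi 0)
    · intro x hx
      exact ((hQderiv x hx).differentiableAt).continuousAt.continuousWithinAt
    · intro x hx
      rw [interior_Ioi] at hx
      exact hQderivneg x hx
  -- pinf ≤ Q z for z > 0
  have hQlb : ∀ z : ℝ, 0 < z → pinf ≤ Q z := by
    intro z hz
    apply le_of_tendsto hlim
    filter_upwards [eventually_gt_atTop z] with y hy
    exact (hQanti hz (hz.trans hy) hy).le
  -- P 1 > 0 and P z ≤ P 1 * z^(5/3) for z ≥ 1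
  have hP1 : 0 < P 1 := by
    have := hQlb 1 one_pos
    have h1 : Q 1 = P 1 := by simp [hQ]
    linarith [h1 ▸ this]
  have hupper1 : ∀ z : ℝ, 1 ≤ z → P z ≤ P 1 * z ^ (5 / 3 : ℝ) := by
    intro z hz
    have hzpos : (0 : ℝ) < z := lt_of_lt_of_le one_pos hz
    have hQz : Q z ≤ Q 1 := by
      rcases eq_or_lt_of_le hz with h | h
      · rw [← h]
      · exact (hQanti (Set.mem_Ioi.mpr one_pos) (Set.mem_Ioi.mpr hzpos) h).le
    have h1 : Q 1 = P 1 := by simp [hQ]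
    have hp : (0 : ℝ) < z ^ (5 / 3 : ℝ) := Real.rpow_pos_of_pos hzpos _
    have : P z / z ^ (5 / 3 : ℝ) ≤ P 1 := by rw [← h1]; exact hQz
    calc P z = P z / z ^ (5 / 3 : ℝ) * z ^ (5 / 3 : ℝ) := by field_simp
      _ ≤ P 1 * z ^ (5 / 3 : ℝ) := by
          exact mul_le_mul_of_nonneg_right this hp.le
  -- bound on P' on [0,1]
  obtain ⟨M, hMmem, hM⟩ : ∃ M ∈ Set.Icc (0:ℝ) 1, ∀ x ∈ Set.Icc (0:ℝ) 1, P' x ≤ P' M := by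
    have hcont : ContinuousOn P' (Set.Icc (0:ℝ) 1) := by
      have hg : ContinuousOn (derivWithin P (Set.Ici 0)) (Set.Ici 0) :=
        hP_C1.continuousOn_derivWithin (uniqueDiffOn_Ici 0) le_rfl
      have heq : Set.EqOn P' (derivWithin P (Set.Ici 0)) (Set.Ici 0) := by
        intro x hx
        exact ((hderiv x hx).derivWithin (uniqueDiffOn_Ici 0 x hx)).symm
      exact (hg.congr heq).mono Set.Icc_subset_Ici_self
    obtain ⟨x, hx, hmax⟩ := isCompact_Icc.exists_isMaxOn
      (Set.nonempty_Icc.mpr zero_le_one) hcont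
    exact ⟨x, hx, fun y hy => hmax hy⟩
  set M0 : ℝ := P' M with hM0
  have hM0pos : 0 < M0 := hP'pos M hMmem.1
  -- P z ≤ M0 * z on [0,1]
  have hupper0 : ∀ z : ℝ, 0 ≤ z → z ≤ 1 → P z ≤ M0 * z := by
    intro z hz0 hz1
    have hd : ∀ x ∈ Set.Icc (0:ℝ) 1, HasDerivWithinAt P (P' x) (Set.Icc 0 1) x :=
      fun x hx => (hderiv x hx.1).mono Set.Icc_subset_Ici_self
    have hb : ∀ x ∈ Set.Icc (0:ℝ) 1, ‖P' x‖ ≤ M0 := by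
      intro x hx
      rw [Real.norm_eq_abs, abs_of_pos (hP'pos x hx.1)]
      exact hM x hx
    have := (convex_Icc (0:ℝ) 1).norm_image_sub_le_of_norm_hasDerivWithin_le hd hb
      (Set.left_mem_Icc.mpr zero_le_one) ⟨hz0, hz1⟩
    rw [hP0, sub_zero, sub_zero, Real.norm_eq_abs, Real.norm_eq_abs,
      abs_of_nonneg hz0] at this
    calc P z ≤ |P z| := le_abs_self _
      _ ≤ M0 * z := this
  -- the constant
  refine ⟨max (max 1 pinf⁻¹) (max M0 (P 1)), le_trans (le_max_left 1 _) (le_max_left _ _),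
    fun ρ θ hρ hθ => ?_⟩
  set c : ℝ := max (max 1 pinf⁻¹) (max M0 (P 1)) with hc
  have hcpos : 0 < c := lt_of_lt_of_le one_pos (le_trans (le_max_left 1 _) (le_max_left _ _))
  set t : ℝ := θ ^ (3 / 2 : ℝ) with ht
  have htpos : 0 < t := Real.rpow_pos_of_pos hθ _
  set Z : ℝ := ρ / t with hZ
  have hZpos : 0 < Z := div_pos hρ htpos
  -- algebra: θ^(5/2) * Z^(5/3) = ρ^(5/3)
  have ht53 : t ^ (5 / 3 : ℝ) = θ ^ (5 / 2 : ℝ) := by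
    rw [ht, ← Real.rpow_mul hθ.le]
    norm_num
  have key1 : θ ^ (5 / 2 : ℝ) * Z ^ (5 / 3 : ℝ) = ρ ^ (5 / 3 : ℝ) := by
    rw [hZ, Real.div_rpow hρ.le htpos.le, ht53]
    field_simp
  -- algebra: θ^(5/2) * Z = ρ * θ
  have key2 : θ ^ (5 / 2 : ℝ) * Z = ρ * θ := by
    have h52 : θ ^ (5 / 2 : ℝ) = t * θ := by
      have h := Real.rpow_add hθ (3 / 2) 1
      norm_num at h
      rw [ht, h]
    rw [hZ, h52]
    field_simp
  have hθ52pos : 0 < θ ^ (5 / 2 : ℝ) := Real.rpow_pos_of_pos hθ _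
  have hρ53pos : 0 < ρ ^ (5 / 3 : ℝ) := Real.rpow_pos_of_pos hρ _
  constructor
  · -- lower bound
    have h1 : pinf ≤ Q Z := hQlb Z hZpos
    have hZ53 : 0 < Z ^ (5 / 3 : ℝ) := Real.rpow_pos_of_pos hZpos _
    have h2 : pinf * Z ^ (5 / 3 : ℝ) ≤ P Z := by
      have := mul_le_mul_of_nonneg_right h1 hZ53.le
      rwa [hQ, div_mul_cancel₀ _ hZ53.ne'] at this
    have h3 : pinf * ρ ^ (5 / 3 : ℝ) ≤ θ ^ (5 / 2 : ℝ) * P Z := by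
      calc pinf * ρ ^ (5 / 3 : ℝ) = θ ^ (5 / 2 : ℝ) * (pinf * Z ^ (5 / 3 : ℝ)) := by
            rw [← key1]; ring
        _ ≤ θ ^ (5 / 2 : ℝ) * P Z := mul_le_mul_of_nonneg_left h2 hθ52pos.le
    have hcinv : c⁻¹ ≤ pinf := by
      have h4 : pinf⁻¹ ≤ c := le_trans (le_max_right 1 _) (le_max_left _ _)
      rw [← inv_inv pinf]
      exact inv_anti₀ (inv_pos.mpr hpinf) h4
    calc c⁻¹ * ρ ^ (5 / 3 : ℝ) ≤ pinf * ρ ^ (5 / 3 : ℝ) :=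
          mul_le_mul_of_nonneg_right hcinv hρ53pos.le
      _ ≤ θ ^ (5 / 2 : ℝ) * P Z := h3
  · -- upper bound
    rcases le_or_gt Z 1 with hZ1 | hZ1
    · have h1 : P Z ≤ M0 * Z := hupper0 Z hZpos.le hZ1
      have h2 : θ ^ (5 / 2 : ℝ) * P Z ≤ M0 * (ρ * θ) := by
        calc θ ^ (5 / 2 : ℝ) * P Z ≤ θ ^ (5 / 2 : ℝ) * (M0 * Z) :=
              mul_le_mul_of_nonneg_left h1 hθ52pos.le
          _ = M0 * (θ ^ (5 / 2 : ℝ) * Z) := by ring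
          _ = M0 * (ρ * θ) := by rw [key2]
      have hMc : M0 ≤ c := le_trans (le_max_left M0 _) (le_max_right _ _)
      have hρθpos : 0 < ρ * θ := mul_pos hρ hθ
      calc θ ^ (5 / 2 : ℝ) * P Z ≤ M0 * (ρ * θ) := h2
        _ ≤ c * (ρ * θ) := mul_le_mul_of_nonneg_right hMc hρθpos.le
        _ ≤ c * (ρ ^ (5 / 3 : ℝ) + ρ * θ) := by nlinarith
    · have h1 : P Z ≤ P 1 * Z ^ (5 / 3 : ℝ) := hupper1 Z hZ1.le
      have h2 : θ ^ (5 / 2 : ℝ) * P Z ≤ P 1 * ρ ^ (5 / 3 : ℝ) := by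
        calc θ ^ (5 / 2 : ℝ) * P Z ≤ θ ^ (5 / 2 : ℝ) * (P 1 * Z ^ (5 / 3 : ℝ)) :=
              mul_le_mul_of_nonneg_left h1 hθ52pos.le
          _ = P 1 * (θ ^ (5 / 2 : ℝ) * Z ^ (5 / 3 : ℝ)) := by ring
          _ = P 1 * ρ ^ (5 / 3 : ℝ) := by rw [key1]
      have hPc : P 1 ≤ c := le_trans (le_max_right M0 _) (le_max_right _ _)
      have hρθpos : 0 < ρ * θ := mul_pos hρ hθ
      calc θ ^ (5 / 2 : ℝ) * P Z ≤ P 1 * ρ ^ (5 / 3 : ℝ) := h2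
        _ ≤ c * ρ ^ (5 / 3 : ℝ) := mul_le_mul_of_nonneg_right hPc hρ53pos.le
        _ ≤ c * (ρ ^ (5 / 3 : ℝ) + ρ * θ) := by nlinarith
end

section
/- Under the structural hypotheses on P and for any radiation constant a > 0, the specific internal energy e(ρ,θ) = e_M(ρ,θ) + a·θ⁴/ρ satisfies the coercivity bound (3p_∞/2)·ρ^{5/3} + a·θ⁴ ≤ ρ·e(ρ,θ) for all ρ > 0 and θ > 0. -/
open Filter

/-- Coercivity of the internal energy: with `e(ρ,θ) = e_M(ρ,θ) + a θ⁴/ρ` and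
`e_M(ρ,θ) = (3/2) p_M(ρ,θ)/ρ`, `p_M(ρ,θ) = θ^(5/2) P(ρ/θ^(3/2))`, one has
`(3 pinf/2) ρ^(5/3) + a θ⁴ ≤ ρ e(ρ,θ)` for all `ρ, θ > 0`. -/
theorem stmt4
    (P P' : ℝ → ℝ) (c0 pinf a : ℝ)
    (hP_C1 : ContDiffOn ℝ 1 P (Set.Ici 0))
    (hP_C2 : ContDiffOn ℝ 2 P (Set.Ioi 0))
    (hP0 : P 0 = 0)
    (hderiv : ∀ Z : ℝ, 0 ≤ Z → HasDerivWithinAt P (P' Z) (Set.Ici 0) Z)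
    (hP'pos : ∀ Z : ℝ, 0 ≤ Z → 0 < P' Z)
    (hc0 : 0 < c0)
    (hkey : ∀ Z : ℝ, 0 < Z →
      0 < 3 / 2 * (5 / 3 * P Z - Z * P' Z) / Z ∧
        3 / 2 * (5 / 3 * P Z - Z * P' Z) / Z < c0)
    (hpinf : 0 < pinf)
    (hlim : Tendsto (fun Z : ℝ => P Z / Z ^ (5 / 3 : ℝ)) atTop (nhds pinf))
    (ha : 0 < a) :
    ∀ ρ θ : ℝ, 0 < ρ → 0 < θ →
      3 * pinf / 2 * ρ ^ (5 / 3 : ℝ) + a * θ ^ 4 ≤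
        ρ * (3 / 2 * (θ ^ (5 / 2 : ℝ) * P (ρ / θ ^ (3 / 2 : ℝ))) / ρ + a * θ ^ 4 / ρ) := by
  -- Step 1: g := fun Z => P Z / Z ^ (5/3) has negative derivative on (0, ∞)
  set g : ℝ → ℝ := fun Z => P Z / Z ^ (5 / 3 : ℝ) with hg
  have hgd : ∀ x : ℝ, 0 < x → HasDerivAt g
      ((P' x * x ^ (5 / 3 : ℝ) - P x * ((5 / 3 : ℝ) * x ^ ((5 / 3 : ℝ) - 1))) /
        (x ^ (5 / 3 : ℝ)) ^ 2) x := by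
    intro x hx
    have hPx : HasDerivAt P (P' x) x :=
      (hderiv x hx.le).hasDerivAt (Ici_mem_nhds hx)
    have hpow : HasDerivAt (fun y : ℝ => y ^ (5 / 3 : ℝ))
        ((5 / 3 : ℝ) * x ^ ((5 / 3 : ℝ) - 1)) x :=
      Real.hasDerivAt_rpow_const (Or.inl hx.ne')
    exact hPx.div hpow (by positivity)
  have hderiv_neg : ∀ x : ℝ, 0 < x →
      (P' x * x ^ (5 / 3 : ℝ) - P x * ((5 / 3 : ℝ) * x ^ ((5 / 3 : ℝ) - 1))) /
        (x ^ (5 / 3 : ℝ)) ^ 2 < 0 := by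
    intro x hx
    have hnum : 0 < 5 / 3 * P x - x * P' x := by
      have h := (hkey x hx).1
      have hx' : 0 < (3 : ℝ) / 2 * (5 / 3 * P x - x * P' x) := by
        have := mul_pos h hx
        rw [div_mul_cancel₀] at this
        · exact this
        · exact hx.ne'
      linarith
    have h53 : x ^ (5 / 3 : ℝ) = x * x ^ ((5 / 3 : ℝ) - 1) := by
      rw [← Real.rpow_one_add' hx.le (by norm_num)]
      norm_num
    have hxp : 0 < x ^ ((5 / 3 : ℝ) - 1) := Real.rpow_pos_of_pos hx _
    apply div_neg_of_neg_of_pos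
    · rw [h53]
      have : P' x * (x * x ^ ((5 / 3 : ℝ) - 1)) - P x * (5 / 3 * x ^ ((5 / 3 : ℝ) - 1))
          = x ^ ((5 / 3 : ℝ) - 1) * (x * P' x - 5 / 3 * P x) := by ring
      rw [this]
      exact mul_neg_of_pos_of_neg hxp (by linarith)
    · positivity
  have hanti : StrictAntiOn g (Set.Ioi 0) := by
    apply strictAntiOn_of_deriv_neg (convex_Ioi 0)
    · intro x hx
      exact ((hgd x hx).continuousAt).continuousWithinAt
    · intro x hx
      rw [interior_Ioi] at hx
      rw [(hgd x hx).deriv]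
      exact hderiv_neg x hx
  -- Step 2: pinf ≤ g Z for Z > 0
  have hlb : ∀ Z : ℝ, 0 < Z → pinf ≤ g Z := by
    intro Z hZ
    refine le_of_tendsto hlim ?_
    filter_upwards [eventually_gt_atTop Z] with W hW
    exact (hanti hZ (hZ.trans hW) hW).le
  -- Step 3: conclude
  intro ρ θ hρ hθ
  have hθ32 : (0 : ℝ) < θ ^ (3 / 2 : ℝ) := Real.rpow_pos_of_pos hθ _
  set Z : ℝ := ρ / θ ^ (3 / 2 : ℝ) with hZdef
  have hZ : 0 < Z := div_pos hρ hθ32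
  have hkey2 : pinf * Z ^ (5 / 3 : ℝ) ≤ P Z := by
    have := hlb Z hZ
    rw [hg, le_div_iff₀ (Real.rpow_pos_of_pos hZ _)] at this
    linarith
  have hZpow : Z ^ (5 / 3 : ℝ) = ρ ^ (5 / 3 : ℝ) / θ ^ (5 / 2 : ℝ) := by
    rw [hZdef, Real.div_rpow hρ.le hθ32.le, ← Real.rpow_mul hθ.le]
    norm_num
  have hθ52 : (0 : ℝ) < θ ^ (5 / 2 : ℝ) := Real.rpow_pos_of_pos hθ _
  have hmain : pinf * ρ ^ (5 / 3 : ℝ) ≤ θ ^ (5 / 2 : ℝ) * P Z := by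
    have := mul_le_mul_of_nonneg_left hkey2 hθ52.le
    rw [hZpow] at this
    calc pinf * ρ ^ (5 / 3 : ℝ)
        = θ ^ (5 / 2 : ℝ) * (pinf * (ρ ^ (5 / 3 : ℝ) / θ ^ (5 / 2 : ℝ))) := by
          field_simp
      _ ≤ θ ^ (5 / 2 : ℝ) * P Z := this
  have hrw : ρ * (3 / 2 * (θ ^ (5 / 2 : ℝ) * P Z) / ρ + a * θ ^ 4 / ρ)
      = 3 / 2 * (θ ^ (5 / 2 : ℝ) * P Z) + a * θ ^ 4 := by
    field_simp
  rw [hrw]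
  linarith
end

section
/- Under the structural hypotheses on P, there exists a constant c̄ > 0 such that for all ρ > 0 and θ > 0: 0 ≤ e_M(ρ,θ) ≤ c̄·(ρ^{2/3} + θ). -/
open Filter

/-- Under the structural hypotheses on `P`, there is a constant `c̄ > 0` such that
`0 ≤ e_M(ρ,θ) ≤ c̄ (ρ^(2/3) + θ)` for all `ρ, θ > 0`, where
`e_M(ρ,θ) = (3/2) p_M(ρ,θ)/ρ` and `p_M(ρ,θ) = θ^(5/2) P(ρ/θ^(3/2))`. -/
theorem stmt5
    (P P' : ℝ → ℝ) (c0 pinf : ℝ)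
    (hP_C1 : ContDiffOn ℝ 1 P (Set.Ici 0))
    (hP_C2 : ContDiffOn ℝ 2 P (Set.Ioi 0))
    (hP0 : P 0 = 0)
    (hderiv : ∀ Z : ℝ, 0 ≤ Z → HasDerivWithinAt P (P' Z) (Set.Ici 0) Z)
    (hP'pos : ∀ Z : ℝ, 0 ≤ Z → 0 < P' Z)
    (hc0 : 0 < c0)
    (hkey : ∀ Z : ℝ, 0 < Z →
      0 < 3 / 2 * (5 / 3 * P Z - Z * P' Z) / Z ∧
        3 / 2 * (5 / 3 * P Z - Z * P' Z) / Z < c0)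
    (hpinf : 0 < pinf)
    (hlim : Tendsto (fun Z : ℝ => P Z / Z ^ (5 / 3 : ℝ)) atTop (nhds pinf)) :
    ∃ cbar : ℝ, 0 < cbar ∧ ∀ ρ θ : ℝ, 0 < ρ → 0 < θ →
      0 ≤ 3 / 2 * (θ ^ (5 / 2 : ℝ) * P (ρ / θ ^ (3 / 2 : ℝ))) / ρ ∧
        3 / 2 * (θ ^ (5 / 2 : ℝ) * P (ρ / θ ^ (3 / 2 : ℝ))) / ρ ≤
          cbar * (ρ ^ (2 / 3 : ℝ) + θ) := by
  -- positivity of P on positives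
  have hPpos : ∀ Z : ℝ, 0 < Z → 0 < P Z := by
    intro Z hZ
    have h1 := (hkey Z hZ).1
    have h2 : 0 < 3 / 2 * (5 / 3 * P Z - Z * P' Z) := by
      have := mul_pos h1 hZ
      rwa [div_mul_cancel₀ _ hZ.ne'] at this
    nlinarith [mul_pos hZ (hP'pos Z hZ.le)]
  -- eventual bound from the limit
  have hev : ∀ᶠ Z : ℝ in atTop, P Z / Z ^ (5 / 3 : ℝ) < pinf + 1 :=
    hlim.eventually (gt_mem_nhds (lt_add_one pinf))
  obtain ⟨M, hM⟩ := eventually_atTop.mp hev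
  set M₀ : ℝ := max M 1 with hM₀def
  have hM₀1 : (1 : ℝ) ≤ M₀ := le_max_right _ _
  have hM₀0 : (0 : ℝ) ≤ M₀ := by linarith
  -- P' is the derivWithin, hence continuous on [0, ∞)
  have hderivW : ∀ Z ∈ Set.Ici (0 : ℝ), derivWithin P (Set.Ici 0) Z = P' Z := by
    intro Z hZ
    exact (hderiv Z hZ).derivWithin (uniqueDiffOn_Ici 0 Z hZ)
  have hcont : ContinuousOn P' (Set.Ici (0 : ℝ)) := by
    have h := hP_C1.continuousOn_derivWithin (uniqueDiffOn_Ici 0) le_rfl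
    exact h.congr fun x hx => (hderivW x hx).symm
  obtain ⟨K, hK⟩ := (isCompact_Icc : IsCompact (Set.Icc (0 : ℝ) M₀)).exists_bound_of_continuousOn
    (hcont.mono (fun x hx => hx.1))
  -- linear bound on [0, M₀] by the mean value inequality
  have hlin : ∀ Z ∈ Set.Icc (0 : ℝ) M₀, P Z ≤ K * Z := by
    intro Z hZ
    have hmvt := (convex_Icc (0 : ℝ) M₀).norm_image_sub_le_of_norm_hasDerivWithin_le
      (f' := P') (fun x hx => (hderiv x hx.1).mono Set.Icc_subset_Ici_self)
      (fun x hx => hK x hx) (Set.left_mem_Icc.mpr hM₀0) hZ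
    rw [hP0, sub_zero, sub_zero] at hmvt
    have h1 : P Z ≤ ‖P Z‖ := le_abs_self _
    have h2 : ‖Z‖ = Z := abs_of_nonneg hZ.1
    rw [h2] at hmvt
    linarith
  set C : ℝ := max K (pinf + 1) with hCdef
  have hCpos : 0 < C := lt_of_lt_of_le (by linarith) (le_max_right _ _)
  -- global bound
  have hPbound : ∀ Z : ℝ, 0 < Z → P Z ≤ C * (Z + Z ^ (5 / 3 : ℝ)) := by
    intro Z hZ
    have hZ53 : 0 < Z ^ (5 / 3 : ℝ) := Real.rpow_pos_of_pos hZ _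
    rcases le_or_gt Z M₀ with h | h
    · have h1 : P Z ≤ K * Z := hlin Z ⟨hZ.le, h⟩
      have h2 : K * Z ≤ C * Z := mul_le_mul_of_nonneg_right (le_max_left _ _) hZ.le
      nlinarith
    · have hZM : M ≤ Z := le_trans (le_max_left _ _) h.le
      have h1 := hM Z hZM
      have h2 : P Z < (pinf + 1) * Z ^ (5 / 3 : ℝ) := by
        rw [div_lt_iff₀ hZ53] at h1
        linarith
      have h3 : (pinf + 1) * Z ^ (5 / 3 : ℝ) ≤ C * Z ^ (5 / 3 : ℝ) :=
        mul_le_mul_of_nonneg_right (le_max_right _ _) hZ53.le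
      nlinarith
  refine ⟨3 / 2 * C, by linarith, fun ρ θ hρ hθ => ?_⟩
  set Z : ℝ := ρ / θ ^ (3 / 2 : ℝ) with hZdef
  have hθ32 : 0 < θ ^ (3 / 2 : ℝ) := Real.rpow_pos_of_pos hθ _
  have hθ52 : 0 < θ ^ (5 / 2 : ℝ) := Real.rpow_pos_of_pos hθ _
  have hZpos : 0 < Z := div_pos hρ hθ32
  have hPZ := hPpos Z hZpos
  constructor
  · positivity
  · -- identities
    have id0 : θ ^ (5 / 2 : ℝ) = θ * θ ^ (3 / 2 : ℝ) := by
      rw [← Real.rpow_one_add' hθ.le (by norm_num)]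
      norm_num
    have id1 : θ ^ (5 / 2 : ℝ) * Z = θ * ρ := by
      rw [hZdef, id0]
      field_simp
    have id2 : θ ^ (5 / 2 : ℝ) * Z ^ (5 / 3 : ℝ) = ρ ^ (5 / 3 : ℝ) := by
      have hpow : (θ ^ (3 / 2 : ℝ)) ^ (5 / 3 : ℝ) = θ ^ (5 / 2 : ℝ) := by
        rw [← Real.rpow_mul hθ.le]
        norm_num
      rw [hZdef, Real.div_rpow hρ.le hθ32.le, hpow]
      field_simp
    have id3 : ρ ^ (5 / 3 : ℝ) = ρ ^ (2 / 3 : ℝ) * ρ := by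
      rw [show (5 / 3 : ℝ) = 2 / 3 + 1 by norm_num, Real.rpow_add hρ, Real.rpow_one]
    have hbound := hPbound Z hZpos
    have h4 : θ ^ (5 / 2 : ℝ) * P Z ≤ C * (θ * ρ + ρ ^ (2 / 3 : ℝ) * ρ) := by
      have := mul_le_mul_of_nonneg_left hbound hθ52.le
      calc θ ^ (5 / 2 : ℝ) * P Z ≤ θ ^ (5 / 2 : ℝ) * (C * (Z + Z ^ (5 / 3 : ℝ))) := this
        _ = C * (θ ^ (5 / 2 : ℝ) * Z + θ ^ (5 / 2 : ℝ) * Z ^ (5 / 3 : ℝ)) := by ring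
        _ = C * (θ * ρ + ρ ^ (2 / 3 : ℝ) * ρ) := by rw [id1, id2, id3]
    rw [div_le_iff₀ hρ]
    nlinarith [Real.rpow_pos_of_pos hρ (2/3:ℝ)]
end

section
/- Under the structural hypotheses on P and the entropy hypotheses, there exists a constant s_∞ > 0 such that for all ρ > 0 and θ > 0: 0 ≤ s_M(ρ,θ) ≤ s_∞·(1 + |log ρ| + max(log θ, 0)). -/
open Filter

/-- Under the structural hypotheses on `P` and the entropy hypotheses on `S`, there is a
constant `s∞ > 0` such that `0 ≤ s_M(ρ,θ) ≤ s∞ (1 + |log ρ| + max (log θ) 0)` for all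
`ρ, θ > 0`, where `s_M(ρ,θ) = S(ρ/θ^(3/2))`. -/
theorem stmt7
    (P P' : ℝ → ℝ) (c0 pinf : ℝ)
    (hP_C1 : ContDiffOn ℝ 1 P (Set.Ici 0))
    (hP_C2 : ContDiffOn ℝ 2 P (Set.Ioi 0))
    (hP0 : P 0 = 0)
    (hderiv : ∀ Z : ℝ, 0 ≤ Z → HasDerivWithinAt P (P' Z) (Set.Ici 0) Z)
    (hP'pos : ∀ Z : ℝ, 0 ≤ Z → 0 < P' Z)
    (hc0 : 0 < c0)
    (hkey : ∀ Z : ℝ, 0 < Z →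
      0 < 3 / 2 * (5 / 3 * P Z - Z * P' Z) / Z ∧
        3 / 2 * (5 / 3 * P Z - Z * P' Z) / Z < c0)
    (hpinf : 0 < pinf)
    (hlim : Tendsto (fun Z : ℝ => P Z / Z ^ (5 / 3 : ℝ)) atTop (nhds pinf))
    (S : ℝ → ℝ)
    (hS_C1 : ContDiffOn ℝ 1 S (Set.Ioi 0))
    (hSd : ∀ Z : ℝ, 0 < Z →
      HasDerivAt S (-(3 / 2) * (5 / 3 * P Z - Z * P' Z) / Z ^ 2) Z)
    (hSlim : Tendsto S atTop (nhds 0)) :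
    ∃ sinf : ℝ, 0 < sinf ∧ ∀ ρ θ : ℝ, 0 < ρ → 0 < θ →
      0 ≤ S (ρ / θ ^ (3 / 2 : ℝ)) ∧
        S (ρ / θ ^ (3 / 2 : ℝ)) ≤
          sinf * (1 + |Real.log ρ| + max (Real.log θ) 0) := by
  -- S is strictly decreasing on (0,∞)
  have hScont : ContinuousOn S (Set.Ioi 0) := hS_C1.continuousOn
  have hanti : StrictAntiOn S (Set.Ioi 0) := by
    apply strictAntiOn_of_deriv_neg (convex_Ioi 0) hScont
    intro x hx
    rw [interior_Ioi] at hx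
    rw [(hSd x hx).deriv]
    have h := (hkey x hx).1
    have hx' : x ≠ 0 := hx.ne'
    have heq : -(3 / 2) * (5 / 3 * P x - x * P' x) / x ^ 2
        = -((3 / 2 * (5 / 3 * P x - x * P' x) / x) / x) := by
      ring
    rw [heq]
    exact neg_neg_of_pos (div_pos h hx)
  -- S is nonnegative on (0,∞)
  have hnonneg : ∀ Z : ℝ, 0 < Z → 0 ≤ S Z := by
    intro Z hZ
    refine le_of_tendsto hSlim ?_
    filter_upwards [eventually_gt_atTop Z] with W hW
    exact (hanti hZ (hZ.trans hW) hW).le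
  -- t ↦ S t + c0 log t is strictly increasing on (0,∞)
  have hmono : StrictMonoOn (fun t => S t + c0 * Real.log t) (Set.Ioi 0) := by
    apply strictMonoOn_of_deriv_pos (convex_Ioi 0)
    · exact hScont.add (continuousOn_const.mul
        (Real.continuousOn_log.mono (fun x hx => ne_of_gt hx)))
    · intro x hx
      rw [interior_Ioi] at hx
      have hd : HasDerivAt (fun t => S t + c0 * Real.log t)
          (-(3 / 2) * (5 / 3 * P x - x * P' x) / x ^ 2 + c0 * x⁻¹) x :=
        (hSd x hx).add ((Real.hasDerivAt_log hx.ne').const_mul c0)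
      rw [hd.deriv]
      have h := (hkey x hx).2
      have hx' : x ≠ 0 := hx.ne'
      have heq : -(3 / 2) * (5 / 3 * P x - x * P' x) / x ^ 2 + c0 * x⁻¹
          = (c0 - 3 / 2 * (5 / 3 * P x - x * P' x) / x) / x := by
        ring
      rw [heq]
      exact div_pos (by linarith) hx
  have h1mem : (1 : ℝ) ∈ Set.Ioi (0 : ℝ) := by norm_num
  set M := max (S 1) 0 with hM
  have hM0 : 0 ≤ M := le_max_right _ _
  have hS1M : S 1 ≤ M := le_max_left _ _
  refine ⟨M + 3 / 2 * c0 + 1, by linarith, ?_⟩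
  intro ρ θ hρ hθ
  have hθp : (0 : ℝ) < θ ^ (3 / 2 : ℝ) := Real.rpow_pos_of_pos hθ _
  set Z := ρ / θ ^ (3 / 2 : ℝ) with hZdef
  have hZ : 0 < Z := div_pos hρ hθp
  have hlogZ : Real.log Z = Real.log ρ - 3 / 2 * Real.log θ := by
    rw [hZdef, Real.log_div hρ.ne' hθp.ne', Real.log_rpow hθ]
  set a := |Real.log ρ| with ha'
  set b := max (Real.log θ) 0 with hb'
  have ha : 0 ≤ a := abs_nonneg _
  have hb : 0 ≤ b := le_max_right _ _
  have hlρ : -Real.log ρ ≤ a := neg_le_abs _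
  have hlθ : Real.log θ ≤ b := le_max_left _ _
  refine ⟨hnonneg Z hZ, ?_⟩
  by_cases h1 : Z < 1
  · have hkey2 := hmono (Set.mem_Ioi.mpr hZ) h1mem h1
    simp only [Real.log_one, mul_zero, add_zero] at hkey2
    -- S Z < S 1 - c0 * log Z
    have e1 : c0 * (-Real.log ρ) ≤ c0 * a := mul_le_mul_of_nonneg_left hlρ hc0.le
    have e2 : c0 * Real.log θ ≤ c0 * b := mul_le_mul_of_nonneg_left hlθ hc0.le
    have hMa : 0 ≤ (M + 1) * a := mul_nonneg (by linarith) ha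
    have hMb : 0 ≤ (M + 1) * b := mul_nonneg (by linarith) hb
    have hcb : 0 ≤ c0 * b := mul_nonneg hc0.le hb
    have hca : 0 ≤ c0 * a := mul_nonneg hc0.le ha
    rw [hlogZ] at hkey2
    nlinarith [hkey2, e1, e2, hMa, hMb, hcb, hca]
  · have hle : S Z ≤ S 1 := by
      rcases eq_or_lt_of_le (not_lt.mp h1) with h | h
      · rw [← h]
      · exact (hanti h1mem (Set.mem_Ioi.mpr hZ) h).le
    have hMa : 0 ≤ (M + 3 / 2 * c0 + 1) * a := mul_nonneg (by linarith) ha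
    have hMb : 0 ≤ (M + 3 / 2 * c0 + 1) * b := mul_nonneg (by linarith) hb
    nlinarith [hle, hMa, hMb]
end

section
/- Under the structural hypotheses on P and the entropy hypotheses, let a > 0, define the full state functions e(ρ,θ) = e_M(ρ,θ) + a·θ⁴/ρ and s(ρ,θ) = s_M(ρ,θ) + (4a/3)·θ³/ρ, and for a fixed constant θ̄ > 0 define the ballistic free energy H_{θ̄}(ρ,θ) = ρ·(e(ρ,θ) − θ̄·s(ρ,θ)). Then there exists a constant c > 0 (depending on θ̄, a and the structural constants) such that for all ρ > 0 and θ > 0: −c·(ρ + 1) + (1/4)·(ρ·e(ρ,θ) + θ̄·ρ·|s(ρ,θ)|) ≤ H_{θ̄}(ρ,θ) ≤ c·(ρ^{5/3} + θ⁴ + 1). -/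
open Filter
set_option maxHeartbeats 1000000

lemma aux_poly (x : ℝ) (_hx : 0 ≤ x) : x^3 ≤ x^4 + 1 := by
  nlinarith [sq_nonneg (x^2 - x), sq_nonneg (x - 1), sq_nonneg x, sq_nonneg (x^2 - 1)]

lemma aux_sq (x : ℝ) (hx : 0 ≤ x) : x^2 ≤ 1 + x^3 := by
  nlinarith [sq_nonneg (x - 1), sq_nonneg x, sq_nonneg (x^2 - x)]

lemma aux_eps (ε x : ℝ) (hε : 0 < ε) (hx : 0 ≤ x) : x^3 ≤ ε*x^4 + (1/ε)^3 := by
  have h := aux_poly (ε*x) (by positivity)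
  have h3 : (0:ℝ) < ε^3 := by positivity
  have key : ε^3 * x^3 ≤ ε^3 * (ε*x^4 + (1/ε)^3) := by
    have h1 : ε^3*(1/ε)^3 = 1 := by field_simp
    nlinarith [h]
  exact le_of_mul_le_mul_left key h3

lemma aux_rpow52 (θ : ℝ) (hθ : 0 < θ) : θ^(5/2:ℝ) ≤ θ^2 + θ^3 := by
  rcases le_total θ 1 with h|h
  · have h1 : θ^(5/2:ℝ) ≤ θ^(2:ℝ) := Real.rpow_le_rpow_of_exponent_ge hθ h (by norm_num)
    rw [show (2:ℝ) = ((2:ℕ):ℝ) by norm_num, Real.rpow_natCast] at h1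
    nlinarith [pow_pos hθ 3]
  · have h1 : θ^(5/2:ℝ) ≤ θ^(3:ℝ) := Real.rpow_le_rpow_of_exponent_le h (by norm_num)
    rw [show (3:ℝ) = ((3:ℕ):ℝ) by norm_num, Real.rpow_natCast] at h1
    nlinarith [sq_nonneg θ]

lemma aux_rho (ρ : ℝ) (hρ : 0 < ρ) : ρ ≤ ρ^(5/3:ℝ) + 1 := by
  rcases le_total ρ 1 with h|h
  · have := Real.rpow_nonneg hρ.le (5/3:ℝ); linarith
  · have h1 : ρ^(1:ℝ) ≤ ρ^(5/3:ℝ) := Real.rpow_le_rpow_of_exponent_le h (by norm_num)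
    rw [Real.rpow_one] at h1; linarith

lemma aux_nlog (ρ : ℝ) (hρ : 0 < ρ) : -(ρ * Real.log ρ) ≤ 1 := by
  have h : Real.log ρ⁻¹ ≤ ρ⁻¹ - 1 := Real.log_le_sub_one_of_pos (inv_pos.2 hρ)
  rw [Real.log_inv] at h
  nlinarith [mul_le_mul_of_nonneg_left h hρ.le, mul_inv_cancel₀ (ne_of_gt hρ)]

lemma aux_logle (θ : ℝ) (hθ : 0 < θ) : Real.log θ ≤ θ := by
  have := Real.log_le_sub_one_of_pos hθ; linarith

/-- Bounds on the ballistic free energy `H_θ̄(ρ,θ) = ρ (e(ρ,θ) - θ̄ s(ρ,θ))`, with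
`e(ρ,θ) = e_M(ρ,θ) + a θ⁴/ρ`, `s(ρ,θ) = s_M(ρ,θ) + (4a/3) θ³/ρ`,
`e_M(ρ,θ) = (3/2) θ^(5/2) P(ρ/θ^(3/2))/ρ` and `s_M(ρ,θ) = S(ρ/θ^(3/2))`:
there is `c > 0` with
`-c(ρ+1) + (1/4)(ρ e + θ̄ ρ |s|) ≤ H_θ̄(ρ,θ) ≤ c (ρ^(5/3) + θ⁴ + 1)` for all `ρ, θ > 0`. -/
theorem stmt8
    (P P' : ℝ → ℝ) (c0 pinf : ℝ)
    (hP_C1 : ContDiffOn ℝ 1 P (Set.Ici 0))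
    (hP_C2 : ContDiffOn ℝ 2 P (Set.Ioi 0))
    (hP0 : P 0 = 0)
    (hderiv : ∀ Z : ℝ, 0 ≤ Z → HasDerivWithinAt P (P' Z) (Set.Ici 0) Z)
    (hP'pos : ∀ Z : ℝ, 0 ≤ Z → 0 < P' Z)
    (hc0 : 0 < c0)
    (hkey : ∀ Z : ℝ, 0 < Z →
      0 < 3 / 2 * (5 / 3 * P Z - Z * P' Z) / Z ∧
        3 / 2 * (5 / 3 * P Z - Z * P' Z) / Z < c0)
    (hpinf : 0 < pinf)
    (hlim : Tendsto (fun Z : ℝ => P Z / Z ^ (5 / 3 : ℝ)) atTop (nhds pinf))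
    (S : ℝ → ℝ)
    (hS_C1 : ContDiffOn ℝ 1 S (Set.Ioi 0))
    (hSd : ∀ Z : ℝ, 0 < Z →
      HasDerivAt S (-(3 / 2) * (5 / 3 * P Z - Z * P' Z) / Z ^ 2) Z)
    (hSlim : Tendsto S atTop (nhds 0))
    (a θbar : ℝ) (ha : 0 < a) (hθbar : 0 < θbar) :
    ∃ c : ℝ, 0 < c ∧ ∀ ρ θ : ℝ, 0 < ρ → 0 < θ →
      ∀ eF sF HF : ℝ,
        eF = 3 / 2 * (θ ^ (5 / 2 : ℝ) * P (ρ / θ ^ (3 / 2 : ℝ))) / ρ + a * θ ^ 4 / ρ →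
        sF = S (ρ / θ ^ (3 / 2 : ℝ)) + 4 * a / 3 * θ ^ 3 / ρ →
        HF = ρ * (eF - θbar * sF) →
        -(c * (ρ + 1)) + 1 / 4 * (ρ * eF + θbar * ρ * |sF|) ≤ HF ∧
          HF ≤ c * (ρ ^ (5 / 3 : ℝ) + θ ^ 4 + 1) := by
  -- basic consequences of hkey
  have hnum : ∀ Z : ℝ, 0 < Z → 0 < 5/3 * P Z - Z * P' Z := by
    intro Z hZ
    have h := (hkey Z hZ).1
    have h2 := mul_pos h hZ
    rw [div_mul_cancel₀ _ (ne_of_gt hZ)] at h2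
    linarith
  have hnum2 : ∀ Z : ℝ, 0 < Z → 3/2 * (5/3 * P Z - Z * P' Z) < c0 * Z := by
    intro Z hZ
    have h := (div_lt_iff₀ hZ).mp (hkey Z hZ).2
    linarith
  have hPpos : ∀ Z : ℝ, 0 < Z → 0 < P Z := by
    intro Z hZ
    have h1 := hnum Z hZ
    have h2 := hP'pos Z hZ.le
    nlinarith [mul_pos hZ h2]
  have hPd : ∀ Z : ℝ, 0 < Z → HasDerivAt P (P' Z) Z := fun Z hZ =>
    (hderiv Z hZ.le).hasDerivAt (Ici_mem_nhds hZ)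
  -- P strictly monotone on Ici 0
  have hPmono : StrictMonoOn P (Set.Ici 0) := by
    apply strictMonoOn_of_hasDerivWithinAt_pos (convex_Ici 0) hP_C1.continuousOn (f' := P')
    · intro x hx
      rw [interior_Ici] at hx
      exact (hPd x hx).hasDerivWithinAt
    · intro x hx
      rw [interior_Ici] at hx
      exact hP'pos x hx.le
  have hPle1 : ∀ Z : ℝ, 0 < Z → Z ≤ 1 → P Z ≤ P 1 :=
    fun Z hZ h1 => hPmono.monotoneOn (Set.mem_Ici.2 hZ.le) (Set.mem_Ici.2 zero_le_one) h1
  -- g = P/Z^{5/3} antitone on Ici 1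
  have hgd : ∀ x : ℝ, 0 < x → HasDerivAt (fun y => P y / y^(5/3:ℝ))
      ((P' x * x^(5/3:ℝ) - P x * (5/3 * x^(5/3-1:ℝ))) / (x^(5/3:ℝ))^2) x := by
    intro x hx
    exact (hPd x hx).div (Real.hasDerivAt_rpow_const (Or.inl hx.ne')) (by positivity)
  have hganti : StrictAntiOn (fun y => P y / y^(5/3:ℝ)) (Set.Ici 1) := by
    apply strictAntiOn_of_hasDerivWithinAt_neg (convex_Ici 1) ?_
        (f' := fun x => (P' x * x^(5/3:ℝ) - P x * (5/3 * x^(5/3-1:ℝ))) / (x^(5/3:ℝ))^2)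
    · intro x hx
      rw [interior_Ici] at hx
      exact (hgd x (lt_trans one_pos (Set.mem_Ioi.1 hx))).hasDerivWithinAt
    · intro x hx
      rw [interior_Ici] at hx
      have hx0 : (0:ℝ) < x := lt_trans one_pos (Set.mem_Ioi.1 hx)
      have hsplit : x^(5/3:ℝ) = x^(5/3-1:ℝ) * x := by
        rw [show (5/3:ℝ) = (5/3-1) + 1 by norm_num, Real.rpow_add hx0, Real.rpow_one]
        norm_num
      apply div_neg_of_neg_of_pos
      · rw [hsplit]
        have h23 : (0:ℝ) < x^(5/3-1:ℝ) := Real.rpow_pos_of_pos hx0 _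
        nlinarith [hnum x hx0]
      · positivity
    · intro x hx
      exact ((hgd x (by linarith [Set.mem_Ici.1 hx])).continuousAt).continuousWithinAt
  have hPbig : ∀ Z : ℝ, 1 ≤ Z → P Z ≤ P 1 * Z^(5/3:ℝ) := by
    intro Z hZ
    have hZ0 : (0:ℝ) < Z := by linarith
    have h53 : (0:ℝ) < Z^(5/3:ℝ) := Real.rpow_pos_of_pos hZ0 _
    have hg : P Z / Z^(5/3:ℝ) ≤ P 1 / (1:ℝ)^(5/3:ℝ) :=
      hganti.antitoneOn (Set.mem_Ici.2 le_rfl) (Set.mem_Ici.2 hZ) hZ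
    rw [Real.one_rpow, div_one] at hg
    exact (div_le_iff₀ h53).mp hg
  -- S antitone on Ioi 0
  have hSanti : StrictAntiOn S (Set.Ioi 0) := by
    apply strictAntiOn_of_hasDerivWithinAt_neg (convex_Ioi 0) ?_
        (f' := fun x => -(3/2) * (5/3 * P x - x * P' x) / x^2)
    · intro x hx
      rw [interior_Ioi] at hx
      exact (hSd x hx).hasDerivWithinAt
    · intro x hx
      rw [interior_Ioi] at hx
      have hx0 : (0:ℝ) < x := Set.mem_Ioi.1 hx
      apply div_neg_of_neg_of_pos
      · nlinarith [hnum x hx0]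
      · positivity
    · intro x hx
      exact ((hSd x hx).continuousAt).continuousWithinAt
  have hS0 : ∀ Z : ℝ, 0 < Z → 0 ≤ S Z := by
    intro Z hZ
    refine le_of_tendsto hSlim ?_
    filter_upwards [eventually_ge_atTop (Z + 1)] with W hW
    exact le_of_lt (hSanti (Set.mem_Ioi.2 hZ) (Set.mem_Ioi.2 (by linarith)) (by linarith))
  have hSbig : ∀ Z : ℝ, 1 ≤ Z → S Z ≤ S 1 :=
    fun Z hZ => (hSanti.antitoneOn (Set.mem_Ioi.2 one_pos) (Set.mem_Ioi.2 (by linarith)) hZ)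
  -- h = S + c0 log monotone
  have hhmono : StrictMonoOn (fun x => S x + c0 * Real.log x) (Set.Ioi 0) := by
    apply strictMonoOn_of_hasDerivWithinAt_pos (convex_Ioi 0) ?_
        (f' := fun x => -(3/2) * (5/3 * P x - x * P' x) / x^2 + c0 * x⁻¹)
    · intro x hx
      rw [interior_Ioi] at hx
      exact ((hSd x hx).add ((Real.hasDerivAt_log hx.ne').const_mul c0)).hasDerivWithinAt
    · intro x hx
      rw [interior_Ioi] at hx
      have hx0 : (0:ℝ) < x := Set.mem_Ioi.1 hx
      have hxne : x ≠ 0 := ne_of_gt hx0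
      have heq : -(3/2) * (5/3 * P x - x * P' x) / x^2 + c0 * x⁻¹
          = (c0 * x - 3/2 * (5/3 * P x - x * P' x)) / x^2 := by
        field_simp; ring
      rw [heq]
      apply div_pos
      · linarith [hnum2 x hx0]
      · positivity
    · intro x hx
      exact (((hSd x hx).add ((Real.hasDerivAt_log (ne_of_gt hx)).const_mul c0)).continuousAt).continuousWithinAt
  have hSsmall : ∀ Z : ℝ, 0 < Z → Z ≤ 1 → S Z ≤ S 1 - c0 * Real.log Z := by
    intro Z hZ h1
    have := hhmono.monotoneOn (Set.mem_Ioi.2 hZ) (Set.mem_Ioi.2 one_pos) h1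
    simp only [Real.log_one, mul_zero, add_zero] at this
    linarith
  -- constants
  have hS1 : 0 ≤ S 1 := hS0 1 one_pos
  have hP1 : 0 < P 1 := hPpos 1 one_pos
  obtain ⟨K, hKdef⟩ : ∃ K : ℝ, K = 3*c0 + 4*a/3 := ⟨_, rfl⟩
  have hK : 0 < K := by rw [hKdef]; linarith
  obtain ⟨ε, hεdef⟩ : ∃ ε : ℝ, ε = 3*a/(5*θbar*K) := ⟨_, rfl⟩
  have hε : 0 < ε := by rw [hεdef]; positivity
  have hc_t1 : 0 ≤ 5/4*θbar*(S 1) := by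
    apply mul_nonneg _ hS1; positivity
  have hc_t2 : 0 ≤ 5/4*θbar*(5*c0/2 + K*(1/ε)^3) := by positivity
  obtain ⟨c, hcdef⟩ : ∃ c : ℝ,
      c = 1 + 5/4*θbar*(S 1) + 5/4*θbar*(5*c0/2 + K*(1/ε)^3) + 9/2*(P 1) + 3*(P 1) + a :=
    ⟨_, rfl⟩
  have hc : 0 < c := by rw [hcdef]; linarith [hc_t1, hc_t2, hP1, ha]
  refine ⟨c, hc, ?_⟩
  intro ρ θ hρ hθ eF sF HF heF hsF hHF
  have hT : (0:ℝ) < θ^(3/2:ℝ) := Real.rpow_pos_of_pos hθ _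
  obtain ⟨Z, hZdef⟩ : ∃ Z : ℝ, Z = ρ / θ^(3/2:ℝ) := ⟨_, rfl⟩
  rw [← hZdef] at heF hsF
  have hZ : 0 < Z := hZdef ▸ div_pos hρ hT
  have hρne : ρ ≠ 0 := ne_of_gt hρ
  have hre : ρ * eF = 3/2*(θ^(5/2:ℝ) * P Z) + a*θ^4 := by
    rw [heF]; field_simp
  have hrs : ρ * sF = ρ * S Z + 4*a/3*θ^3 := by
    rw [hsF]; field_simp
  have hsf0 : 0 ≤ sF := by
    rw [hsF]
    have := hS0 Z hZ
    positivity
  have habs : |sF| = sF := abs_of_nonneg hsf0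
  -- entropy bound
  have hSB : ρ * S Z ≤ (S 1)*ρ + c0 + 3/2*c0*(θ^2+θ^3) := by
    rcases le_or_gt 1 Z with hZ1|hZ1
    · have h := hSbig Z hZ1
      linarith [mul_le_mul_of_nonneg_left h hρ.le,
        mul_pos hc0 (add_pos (pow_pos hθ 2) (pow_pos hθ 3))]
    · have hS := hSsmall Z hZ (le_of_lt hZ1)
      have hlogZ : Real.log Z = Real.log ρ - 3/2 * Real.log θ := by
        rw [hZdef, Real.log_div hρne (ne_of_gt hT), Real.log_rpow hθ]
      have h1 : -(ρ * Real.log ρ) ≤ 1 := aux_nlog ρ hρ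
      have h2 : ρ * Real.log θ ≤ θ^2 + θ^3 := by
        rcases le_or_gt θ 1 with hθ1|hθ1
        · have hl : Real.log θ ≤ 0 := Real.log_nonpos hθ.le hθ1
          linarith [mul_nonpos_of_nonneg_of_nonpos hρ.le hl, pow_pos hθ 2, pow_pos hθ 3]
        · have hρT : ρ < θ^(3/2:ℝ) := by
            rw [hZdef] at hZ1
            exact (div_lt_one hT).mp hZ1
          have hlog0 : 0 ≤ Real.log θ := Real.log_nonneg hθ1.le
          have hlogθ : Real.log θ ≤ θ := aux_logle θ hθ
          have hTθ : θ^(3/2:ℝ) * θ = θ^(5/2:ℝ) := by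
            rw [show (5/2:ℝ) = 3/2 + 1 by norm_num, Real.rpow_add hθ, Real.rpow_one]
          have h52 := aux_rpow52 θ hθ
          linarith [mul_le_mul_of_nonneg_right hρT.le hlog0,
            mul_le_mul_of_nonneg_left hlogθ (le_of_lt hT), hTθ, h52]
      have h3 : ρ * S Z ≤ ρ * (S 1 - c0 * Real.log Z) := mul_le_mul_of_nonneg_left hS hρ.le
      rw [hlogZ] at h3
      linarith [mul_le_mul_of_nonneg_left h2 (by positivity : (0:ℝ) ≤ 3/2*c0),
        mul_le_mul_of_nonneg_left h1 hc0.le]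
  -- energy bound
  have hEB : θ^(5/2:ℝ) * P Z ≤ P 1 * (ρ^(5/3:ℝ) + 3 + 2*θ^4) := by
    rcases le_or_gt 1 Z with hZ1|hZ1
    · have hpb := hPbig Z hZ1
      have hZ53 : θ^(5/2:ℝ) * Z^(5/3:ℝ) = ρ^(5/3:ℝ) := by
        have hne : θ^(5/2:ℝ) ≠ 0 := ne_of_gt (Real.rpow_pos_of_pos hθ _)
        rw [hZdef, Real.div_rpow hρ.le (le_of_lt hT), ← Real.rpow_mul hθ.le,
          show (3/2:ℝ)*(5/3) = 5/2 by norm_num]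
        field_simp
      have hm : θ^(5/2:ℝ) * P Z ≤ θ^(5/2:ℝ) * (P 1 * Z^(5/3:ℝ)) :=
        mul_le_mul_of_nonneg_left hpb (Real.rpow_nonneg hθ.le _)
      calc θ^(5/2:ℝ) * P Z ≤ θ^(5/2:ℝ) * (P 1 * Z^(5/3:ℝ)) := hm
        _ = P 1 * (θ^(5/2:ℝ) * Z^(5/3:ℝ)) := by ring
        _ = P 1 * ρ^(5/3:ℝ) := by rw [hZ53]
        _ ≤ P 1 * (ρ^(5/3:ℝ) + 3 + 2*θ^4) := by linarith [mul_pos hP1 (pow_pos hθ 4), hP1]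
    · have hp1 := hPle1 Z hZ (le_of_lt hZ1)
      have h52 := aux_rpow52 θ hθ
      have hsq := aux_sq θ hθ.le
      have h34 := aux_poly θ hθ.le
      have h52' : θ^(5/2:ℝ) ≤ 3 + 2*θ^4 := by linarith
      have hmm : θ^(5/2:ℝ) * P Z ≤ (3 + 2*θ^4) * P 1 :=
        mul_le_mul h52' hp1 (hPpos Z hZ).le (by linarith [pow_pos hθ 4])
      linarith [hmm, mul_nonneg hP1.le (Real.rpow_nonneg hρ.le (5/3:ℝ))]
  have hrEl : a*θ^4 ≤ ρ*eF := by
    rw [hre]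
    linarith [mul_pos (Real.rpow_pos_of_pos hθ (5/2:ℝ)) (hPpos Z hZ)]
  -- key entropy bound with epsilon
  have key1 : ρ * sF ≤ (S 1)*ρ + 5*c0/2 + K*(ε*θ^4 + (1/ε)^3) := by
    have hKθ : K*θ^3 ≤ K*(ε*θ^4+(1/ε)^3) :=
      mul_le_mul_of_nonneg_left (aux_eps ε θ hε hθ.le) hK.le
    have hsq2 : 3/2*c0*(θ^2) ≤ 3/2*c0*(1+θ^3) :=
      mul_le_mul_of_nonneg_left (aux_sq θ hθ.le) (by positivity)
    have hKθ3 : K*θ^3 = 3*c0*θ^3 + 4*a/3*θ^3 := by rw [hKdef]; ring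
    linarith [hrs, hSB, hKθ, hsq2, hKθ3]
  have key2 : θbar*(ρ*sF) ≤ θbar*((S 1)*ρ + 5*c0/2 + K*(ε*θ^4+(1/ε)^3)) :=
    mul_le_mul_of_nonneg_left key1 hθbar.le
  have hεθ : θbar*(K*(ε*θ^4)) = 3/5*(a*θ^4) := by
    rw [hεdef]
    have hθbne : θbar ≠ 0 := ne_of_gt hθbar
    have hKne : K ≠ 0 := ne_of_gt hK
    field_simp
  have hcρ : 5/4*θbar*(S 1)*ρ ≤ c*ρ := by
    apply mul_le_mul_of_nonneg_right _ hρ.le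
    rw [hcdef]; linarith [hc_t2, hP1, ha]
  have hc2 : 5/4*θbar*(5*c0/2 + K*(1/ε)^3) ≤ c := by
    rw [hcdef]; linarith [hc_t1, hP1, ha]
  constructor
  · -- lower bound
    rw [hHF, habs]
    linarith [key2, hεθ, hcρ, hc2, hrEl]
  · -- upper bound
    rw [hHF]
    have hup1 : ρ*(eF - θbar*sF) ≤ ρ*eF := by
      linarith [mul_nonneg (mul_nonneg hθbar.le hρ.le) hsf0]
    have hρ53 : (0:ℝ) ≤ ρ^(5/3:ℝ) := Real.rpow_nonneg hρ.le _
    have hA : 3/2*(P 1)*ρ^(5/3:ℝ) ≤ c*ρ^(5/3:ℝ) := by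
      apply mul_le_mul_of_nonneg_right _ hρ53
      rw [hcdef]; linarith [hc_t1, hc_t2, hP1, ha]
    have hBt : (3*(P 1) + a)*θ^4 ≤ c*θ^4 := by
      apply mul_le_mul_of_nonneg_right _ (by positivity)
      rw [hcdef]; linarith [hc_t1, hc_t2, hP1]
    have hC : 9/2*(P 1) ≤ c := by rw [hcdef]; linarith [hc_t1, hc_t2, hP1, ha]
    linarith [hup1, hre, hEB, hA, hBt, hC]
end

section
/- Under the structural hypotheses on P and the entropy hypotheses, for every Γ ≥ 2 and every κ > 0 there exists a constant c_κ > 0 such that for all ρ > 0, θ > 0 and all δ ∈ (0,1]: p_M(ρ,θ)/(ρθ) + (e_M(ρ,θ) + δθ)/θ − (s_M(ρ,θ) + δ·log θ) ≤ κ·(ρ^Γ + θ^{−3}) + c_κ. -/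
open Filter

private lemma aux_log (ε : ℝ) (hε : 0 < ε) :
    ∃ C : ℝ, 0 < C ∧ ∀ θ : ℝ, 0 < θ → -Real.log θ ≤ ε * θ ^ (-3 : ℝ) + C := by
  refine ⟨max 1 ((-1 - Real.log (3*ε))/3), lt_of_lt_of_le one_pos (le_max_left _ _), ?_⟩
  intro θ hθ
  have hu : (0:ℝ) < θ ^ (-3:ℝ) := Real.rpow_pos_of_pos hθ _
  have h1 : Real.log (3*ε * θ ^ (-3:ℝ)) ≤ 3*ε * θ ^ (-3:ℝ) - 1 :=
    Real.log_le_sub_one_of_pos (by positivity)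
  rw [Real.log_mul (by positivity) (ne_of_gt hu)] at h1
  have h2 : Real.log (θ ^ (-3:ℝ)) = -3 * Real.log θ := Real.log_rpow hθ _
  have h3 : (-1 - Real.log (3*ε))/3 ≤ max 1 ((-1 - Real.log (3*ε))/3) := le_max_right _ _
  linarith

private lemma aux_young (b : ℝ) (hb : 0 < b) (ρ θ : ℝ) (hρ : 0 < ρ) (hθ : 0 < θ) :
    ρ ^ (2/3 : ℝ) * θ⁻¹ ≤ b^2 * θ ^ (-3 : ℝ) + b⁻¹ * ρ := by
  have ht : 0 < θ⁻¹ := inv_pos.mpr hθ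
  have hu : 0 < ρ ^ (2/3:ℝ) := Real.rpow_pos_of_pos hρ _
  have hth : θ ^ (-3:ℝ) = (θ⁻¹)^3 := by
    rw [show (-3:ℝ) = -((3:ℕ):ℝ) by norm_num, Real.rpow_neg hθ.le, Real.rpow_natCast, inv_pow]
  rw [hth]
  rcases le_or_gt (ρ ^ (2/3:ℝ)) (b^2 * (θ⁻¹)^2) with h | h
  · have h1 : ρ ^ (2/3:ℝ) * θ⁻¹ ≤ b^2 * (θ⁻¹)^2 * θ⁻¹ :=
      mul_le_mul_of_nonneg_right h ht.le
    have h2 : 0 ≤ b⁻¹ * ρ := by positivity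
    nlinarith
  · have hsq : (ρ^(1/3:ℝ))^2 = ρ^(2/3:ℝ) := by
      rw [← Real.rpow_natCast (ρ^(1/3:ℝ)) 2, ← Real.rpow_mul hρ.le]
      norm_num
    have h13 : 0 < ρ^(1/3:ℝ) := Real.rpow_pos_of_pos hρ _
    have hlt : b * θ⁻¹ < ρ^(1/3:ℝ) := by
      have h4 : (b*θ⁻¹)^2 < (ρ^(1/3:ℝ))^2 := by rw [hsq]; nlinarith
      exact lt_of_pow_lt_pow_left₀ 2 h13.le h4
    have hmul : ρ^(2/3:ℝ) * ρ^(1/3:ℝ) = ρ := by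
      rw [← Real.rpow_add hρ]; norm_num
    have key : b * (ρ^(2/3:ℝ) * θ⁻¹) < ρ := by
      have := mul_lt_mul_of_pos_left hlt hu
      nlinarith
    have h5 : ρ^(2/3:ℝ)*θ⁻¹ < b⁻¹*ρ := by
      have h6 := mul_lt_mul_of_pos_left key (inv_pos.mpr hb)
      rwa [← mul_assoc, inv_mul_cancel₀ hb.ne', one_mul] at h6
    nlinarith [pow_pos ht 3, sq_nonneg b]

private lemma aux_rho_s12 (Γ ε : ℝ) (hΓ : 2 ≤ Γ) (hε : 0 < ε) :
    ∃ C : ℝ, 0 < C ∧ ∀ ρ : ℝ, 0 < ρ → ρ ≤ ε * ρ ^ Γ + C := by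
  refine ⟨max 1 ε⁻¹ + 1, by positivity, ?_⟩
  intro ρ hρ
  rcases le_or_gt ρ (max 1 ε⁻¹) with h | h
  · have h0 : 0 ≤ ε * ρ ^ Γ := by positivity
    linarith
  · have h1 : 1 ≤ ρ := le_trans (le_max_left _ _) h.le
    have h2 : ρ ^ (2:ℝ) ≤ ρ ^ Γ := Real.rpow_le_rpow_of_exponent_le h1 hΓ
    have h3 : ρ ^ (2:ℝ) = ρ * ρ := by
      rw [show (2:ℝ) = ((2:ℕ):ℝ) by norm_num, Real.rpow_natCast]; ring
    have h4 : ε⁻¹ ≤ ρ := le_trans (le_max_right _ _) h.le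
    have h5 : ε⁻¹ * ρ ≤ ρ * ρ := mul_le_mul_of_nonneg_right h4 hρ.le
    have h6 : ε * (ε⁻¹ * ρ) = ρ := by field_simp
    have h7 : ε * (ρ*ρ) ≤ ε * ρ ^ Γ := by rw [← h3]; exact mul_le_mul_of_nonneg_left h2 hε.le
    have h8 : ε * (ε⁻¹*ρ) ≤ ε * (ρ*ρ) := mul_le_mul_of_nonneg_left h5 hε.le
    have h9 : (0:ℝ) ≤ max 1 ε⁻¹ := le_trans zero_le_one (le_max_left _ _)
    linarith

private lemma aux_A (P P' : ℝ → ℝ) (c0 : ℝ)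
    (hkey : ∀ Z : ℝ, 0 < Z →
      0 < 3 / 2 * (5 / 3 * P Z - Z * P' Z) / Z ∧
        3 / 2 * (5 / 3 * P Z - Z * P' Z) / Z < c0) :
    ∀ Z : ℝ, 0 < Z → 0 < 5 / 3 * P Z - Z * P' Z := by
  intro Z hZ
  have h1 := (hkey Z hZ).1
  have h2 := mul_pos h1 hZ
  rw [div_mul_cancel₀ _ (ne_of_gt hZ)] at h2
  linarith

private lemma aux_small (P P' : ℝ → ℝ)
    (hP_C1 : ContDiffOn ℝ 1 P (Set.Ici 0)) (hP0 : P 0 = 0)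
    (hderiv : ∀ Z : ℝ, 0 ≤ Z → HasDerivWithinAt P (P' Z) (Set.Ici 0) Z) :
    ∃ M : ℝ, 0 < M ∧ ∀ Z : ℝ, 0 ≤ Z → Z ≤ 1 → P Z ≤ M * Z := by
  have hud : UniqueDiffOn ℝ (Set.Ici (0:ℝ)) := uniqueDiffOn_Ici 0
  have hcont : ContinuousOn P' (Set.Ici 0) := by
    have h := hP_C1.continuousOn_derivWithin hud le_rfl
    exact h.congr fun Z hZ => ((hderiv Z hZ).derivWithin (hud Z hZ)).symm
  obtain ⟨C, hC⟩ := isCompact_Icc.exists_bound_of_continuousOn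
    (hcont.mono (Set.Icc_subset_Ici_self : Set.Icc (0:ℝ) 1 ⊆ Set.Ici 0))
  have hC0 : 0 ≤ C := le_trans (norm_nonneg _) (hC 0 (by norm_num))
  refine ⟨C + 1, by linarith, ?_⟩
  intro Z hZ0 hZ1
  have hmvt := (convex_Icc (0:ℝ) 1).norm_image_sub_le_of_norm_hasDerivWithin_le
    (f := P) (f' := P')
    (fun x hx => (hderiv x hx.1).mono Set.Icc_subset_Ici_self)
    hC (by norm_num : (0:ℝ) ∈ Set.Icc (0:ℝ) 1) (⟨hZ0, hZ1⟩ : Z ∈ Set.Icc (0:ℝ) 1)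
  rw [hP0, sub_zero, sub_zero, Real.norm_eq_abs, Real.norm_eq_abs, abs_of_nonneg hZ0] at hmvt
  have h1 : P Z ≤ |P Z| := le_abs_self _
  nlinarith

private lemma aux_large (P P' : ℝ → ℝ) (c0 : ℝ)
    (hderiv : ∀ Z : ℝ, 0 ≤ Z → HasDerivWithinAt P (P' Z) (Set.Ici 0) Z)
    (hkey : ∀ Z : ℝ, 0 < Z →
      0 < 3 / 2 * (5 / 3 * P Z - Z * P' Z) / Z ∧
        3 / 2 * (5 / 3 * P Z - Z * P' Z) / Z < c0) :
    ∀ Z : ℝ, 1 ≤ Z → P Z ≤ P 1 * Z ^ ((5:ℝ)/3) := by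
  have hA := aux_A P P' c0 hkey
  set g : ℝ → ℝ := fun x => P x * x ^ (-(5/3) : ℝ) with hg
  have hgd : ∀ x : ℝ, 0 < x →
      HasDerivAt g (P' x * x ^ (-(5/3):ℝ) + P x * (-(5/3) * x ^ (-(5/3) - 1 : ℝ))) x := by
    intro x hx
    have hP : HasDerivAt P (P' x) x := (hderiv x hx.le).hasDerivAt (Ici_mem_nhds hx)
    have hr : HasDerivAt (fun y : ℝ => y ^ (-(5/3):ℝ)) (-(5/3) * x ^ (-(5/3) - 1 : ℝ)) x :=
      Real.hasDerivAt_rpow_const (Or.inl hx.ne')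
    exact hP.mul hr
  have hanti : StrictAntiOn g (Set.Ici 1) := by
    apply strictAntiOn_of_deriv_neg (convex_Ici 1)
    · intro x hx
      have hx0 : 0 < x := lt_of_lt_of_le one_pos hx
      exact (hgd x hx0).differentiableAt.continuousAt.continuousWithinAt
    · intro x hx
      rw [interior_Ici] at hx
      have hx0 : 0 < x := lt_trans one_pos hx
      rw [(hgd x hx0).deriv]
      have hw : 0 < x ^ (-(5/3) - 1 : ℝ) := Real.rpow_pos_of_pos hx0 _
      have hxx : x ^ (-(5/3):ℝ) = x * x ^ (-(5/3) - 1 : ℝ) := by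
        have h := Real.rpow_add hx0 1 (-(5/3) - 1)
        rw [Real.rpow_one, show (1 + (-(5/3) - 1) : ℝ) = -(5/3) by norm_num] at h
        exact h
      rw [hxx]
      have hAx := hA x hx0
      nlinarith [mul_pos hw hAx]
  intro Z hZ
  have hZ0 : 0 < Z := lt_of_lt_of_le one_pos hZ
  have hZ53 : 0 < Z ^ ((5:ℝ)/3) := Real.rpow_pos_of_pos hZ0 _
  have hgle : g Z ≤ g 1 := by
    rcases eq_or_lt_of_le hZ with h | h
    · rw [← h]
    · exact (hanti Set.self_mem_Ici hZ h).le
  have hg1 : g 1 = P 1 := by simp [hg, Real.one_rpow]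
  have hcanc : Z ^ (-(5/3):ℝ) * Z ^ ((5:ℝ)/3) = 1 := by
    rw [← Real.rpow_add hZ0]; norm_num
  have hfin := mul_le_mul_of_nonneg_right hgle hZ53.le
  rw [hg1] at hfin
  calc P Z = P Z * (Z ^ (-(5/3):ℝ) * Z ^ ((5:ℝ)/3)) := by rw [hcanc, mul_one]
    _ = g Z * Z ^ ((5:ℝ)/3) := by rw [hg]; ring
    _ ≤ P 1 * Z ^ ((5:ℝ)/3) := hfin

private lemma aux_S (P P' S : ℝ → ℝ) (c0 : ℝ)
    (hkey : ∀ Z : ℝ, 0 < Z →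
      0 < 3 / 2 * (5 / 3 * P Z - Z * P' Z) / Z ∧
        3 / 2 * (5 / 3 * P Z - Z * P' Z) / Z < c0)
    (hSd : ∀ Z : ℝ, 0 < Z →
      HasDerivAt S (-(3 / 2) * (5 / 3 * P Z - Z * P' Z) / Z ^ 2) Z)
    (hSlim : Tendsto S atTop (nhds 0)) :
    ∀ Z : ℝ, 0 < Z → 0 ≤ S Z := by
  have hA := aux_A P P' c0 hkey
  intro Z0 hZ0
  have hanti : StrictAntiOn S (Set.Ici Z0) := by
    apply strictAntiOn_of_deriv_neg (convex_Ici Z0)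
    · intro x hx
      have hx0 : 0 < x := lt_of_lt_of_le hZ0 hx
      exact (hSd x hx0).differentiableAt.continuousAt.continuousWithinAt
    · intro x hx
      rw [interior_Ici] at hx
      have hx0 : 0 < x := lt_trans hZ0 hx
      rw [(hSd x hx0).deriv]
      have hAx := hA x hx0
      have hx2 : 0 < x ^ 2 := by positivity
      apply div_neg_of_neg_of_pos _ hx2
      linarith
  refine le_of_tendsto hSlim ?_
  rw [eventually_atTop]
  exact ⟨Z0, fun x hx => by
    rcases eq_or_lt_of_le hx with h | h
    · rw [← h]
    · exact (hanti Set.self_mem_Ici hx h).le⟩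

set_option maxHeartbeats 1000000 in
/-- For every `Γ ≥ 2` and `κ > 0` there is `c_κ > 0` such that for all `ρ, θ > 0` and
`δ ∈ (0,1]`:
`p_M(ρ,θ)/(ρθ) + (e_M(ρ,θ) + δθ)/θ - (s_M(ρ,θ) + δ log θ) ≤ κ (ρ^Γ + θ⁻³) + c_κ`,
where `p_M(ρ,θ) = θ^(5/2) P(ρ/θ^(3/2))`, `e_M = (3/2) p_M/ρ`, `s_M(ρ,θ) = S(ρ/θ^(3/2))`. -/
theorem stmt12
    (P P' : ℝ → ℝ) (c0 pinf : ℝ)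
    (hP_C1 : ContDiffOn ℝ 1 P (Set.Ici 0))
    (hP_C2 : ContDiffOn ℝ 2 P (Set.Ioi 0))
    (hP0 : P 0 = 0)
    (hderiv : ∀ Z : ℝ, 0 ≤ Z → HasDerivWithinAt P (P' Z) (Set.Ici 0) Z)
    (hP'pos : ∀ Z : ℝ, 0 ≤ Z → 0 < P' Z)
    (hc0 : 0 < c0)
    (hkey : ∀ Z : ℝ, 0 < Z →
      0 < 3 / 2 * (5 / 3 * P Z - Z * P' Z) / Z ∧
        3 / 2 * (5 / 3 * P Z - Z * P' Z) / Z < c0)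
    (hpinf : 0 < pinf)
    (hlim : Tendsto (fun Z : ℝ => P Z / Z ^ (5 / 3 : ℝ)) atTop (nhds pinf))
    (S : ℝ → ℝ)
    (hS_C1 : ContDiffOn ℝ 1 S (Set.Ioi 0))
    (hSd : ∀ Z : ℝ, 0 < Z →
      HasDerivAt S (-(3 / 2) * (5 / 3 * P Z - Z * P' Z) / Z ^ 2) Z)
    (hSlim : Tendsto S atTop (nhds 0))
    (Γ κ : ℝ) (hΓ : 2 ≤ Γ) (hκ : 0 < κ) :
    ∃ cκ : ℝ, 0 < cκ ∧ ∀ ρ θ δ : ℝ, 0 < ρ → 0 < θ → 0 < δ → δ ≤ 1 →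
      θ ^ (5 / 2 : ℝ) * P (ρ / θ ^ (3 / 2 : ℝ)) / (ρ * θ) +
          (3 / 2 * (θ ^ (5 / 2 : ℝ) * P (ρ / θ ^ (3 / 2 : ℝ))) / ρ + δ * θ) / θ -
          (S (ρ / θ ^ (3 / 2 : ℝ)) + δ * Real.log θ) ≤
        κ * (ρ ^ Γ + θ ^ (-3 : ℝ)) + cκ := by
  obtain ⟨M, hM, hMb⟩ := aux_small P P' hP_C1 hP0 hderiv
  have hA := aux_A P P' c0 hkey
  have hBpos : 0 < P 1 := by
    have h1 := hA 1 one_pos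
    have h2 := hP'pos 1 zero_le_one
    nlinarith
  set B := P 1 with hBdef
  have hlarge := aux_large P P' c0 hderiv hkey
  have hPdiv : ∀ Z : ℝ, 0 < Z → P Z / Z ≤ M + B * Z ^ ((2:ℝ)/3) := by
    intro Z hZ
    have h23 : 0 < Z ^ ((2:ℝ)/3) := Real.rpow_pos_of_pos hZ _
    rcases le_or_gt Z 1 with h | h
    · have h1 : P Z ≤ M * Z := hMb Z hZ.le h
      have h2 : P Z / Z ≤ M := by rw [div_le_iff₀ hZ]; linarith
      nlinarith
    · have h1 : P Z ≤ B * Z ^ ((5:ℝ)/3) := hlarge Z h.le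
      have h53 : Z ^ ((5:ℝ)/3) = Z ^ ((2:ℝ)/3) * Z := by
        have h0 := Real.rpow_add hZ (2/3) 1
        rw [Real.rpow_one, show ((2:ℝ)/3 + 1) = (5:ℝ)/3 by norm_num] at h0
        exact h0
      rw [h53] at h1
      have h2 : P Z / Z ≤ B * Z ^ ((2:ℝ)/3) := by
        rw [div_le_iff₀ hZ]; nlinarith
      linarith
  set K := 5/2 * B with hK
  have hKpos : 0 < K := by positivity
  set b := Real.sqrt (κ/(2*K)) with hbdef
  have hbpos : 0 < b := Real.sqrt_pos.mpr (by positivity)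
  have hbsq : K * b^2 = κ/2 := by
    rw [hbdef, Real.sq_sqrt (by positivity : (0:ℝ) ≤ κ/(2*K))]
    field_simp
  obtain ⟨C1, hC1, hlog⟩ := aux_log (κ/2) (by positivity)
  have hKb : 0 < K * b⁻¹ := by positivity
  obtain ⟨C2, hC2, hrho⟩ := aux_rho_s12 Γ (κ / (K * b⁻¹)) hΓ (by positivity)
  refine ⟨5/2*M + 1 + C1 + K*b⁻¹*C2, by positivity, ?_⟩
  intro ρ θ δ hρ hθ hδ hδ1
  have hT : 0 < θ ^ (3/2 : ℝ) := Real.rpow_pos_of_pos hθ _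
  set T := θ ^ (3/2 : ℝ) with hTdef
  set Z := ρ / T with hZdef
  have hZpos : 0 < Z := div_pos hρ hT
  have h52 : θ ^ (5/2 : ℝ) = T * θ := by
    rw [hTdef]
    have h0 := Real.rpow_add hθ (3/2) 1
    rw [Real.rpow_one, show ((3:ℝ)/2 + 1) = (5:ℝ)/2 by norm_num] at h0
    exact h0
  have hPZT : P Z / Z = P Z * T / ρ := by
    rw [hZdef, div_div_eq_mul_div]
  have hgoal_eq : θ ^ (5 / 2 : ℝ) * P Z / (ρ * θ) +
      (3 / 2 * (θ ^ (5 / 2 : ℝ) * P Z) / ρ + δ * θ) / θ -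
      (S Z + δ * Real.log θ)
      = 5/2 * (P Z * T / ρ) + δ - S Z - δ * Real.log θ := by
    rw [h52]
    field_simp
    ring
  rw [hgoal_eq]
  have hZ23 : Z ^ ((2:ℝ)/3) = ρ ^ ((2:ℝ)/3) * θ⁻¹ := by
    have hT23 : T ^ ((2:ℝ)/3) = θ := by
      rw [hTdef, ← Real.rpow_mul hθ.le, show ((3:ℝ)/2 * (2/3)) = (1:ℝ) by norm_num,
        Real.rpow_one]
    rw [hZdef, Real.div_rpow hρ.le hT.le, hT23, div_eq_mul_inv]
  have h1 : P Z / Z ≤ M + B * (ρ ^ ((2:ℝ)/3) * θ⁻¹) := by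
    have := hPdiv Z hZpos
    rwa [hZ23] at this
  rw [hPZT] at h1
  have h1' : 5/2 * (P Z * T / ρ) ≤ 5/2*M + K * (ρ ^ ((2:ℝ)/3) * θ⁻¹) := by
    rw [hK]; nlinarith
  have h2 := aux_young b hbpos ρ θ hρ hθ
  have h2' : K * (ρ ^ (2/3:ℝ) * θ⁻¹) ≤ κ/2 * θ ^ (-3:ℝ) + K * b⁻¹ * ρ := by
    calc K * (ρ ^ (2/3:ℝ) * θ⁻¹) ≤ K * (b^2 * θ ^ (-3:ℝ) + b⁻¹ * ρ) :=
          mul_le_mul_of_nonneg_left h2 hKpos.le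
      _ = κ/2 * θ ^ (-3:ℝ) + K * b⁻¹ * ρ := by
          rw [mul_add, ← mul_assoc, ← mul_assoc, hbsq]
  have h3 := hrho ρ hρ
  have h5 : K * b⁻¹ * (κ / (K * b⁻¹)) = κ := by field_simp
  have h3' : K * b⁻¹ * ρ ≤ κ * ρ ^ Γ + K * b⁻¹ * C2 := by
    calc K * b⁻¹ * ρ ≤ K * b⁻¹ * (κ / (K * b⁻¹) * ρ ^ Γ + C2) :=
          mul_le_mul_of_nonneg_left h3 hKb.le
      _ = κ * ρ ^ Γ + K * b⁻¹ * C2 := by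
          rw [mul_add, ← mul_assoc, h5]
  have h4 := hlog θ hθ
  have hS0 : 0 ≤ S Z := aux_S P P' S c0 hkey hSd hSlim Z hZpos
  have hθ3 : 0 < θ ^ (-3:ℝ) := Real.rpow_pos_of_pos hθ _
  have hlog2 : -(δ * Real.log θ) ≤ κ/2 * θ ^ (-3:ℝ) + C1 := by
    rcases le_or_gt 0 (Real.log θ) with h | h
    · nlinarith
    · nlinarith [mul_nonneg (by linarith : (0:ℝ) ≤ 1-δ) (by linarith : (0:ℝ) ≤ -Real.log θ)]
  linarith
end
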